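/- arXiv:1511.04837 — 4 statements merged into one kernel-verified Lean document; each statement's English description precedes it below -/
import Mathlib

section
/- Let p be a prime and let E and E′ be two nonempty p-homogeneous subsets of ℚ_p whose sets of admissible p-orders I_E and I_{E′} are bounded above. Then I_E = I_{E′} if and only if there exists a bijective isometric transformation f of ℚ_p such that f(E) = E′. -/
noncomputable section

/-- The set of admissible `p`-orders of a set `E ⊆ ℚ_p`. -/
def pOrders (p : ℕ) [Fact p.Prime] (E : Set ℚ_[p]) : Set ℤ :=
  {n : ℤ | ∃ x ∈ E, ∃ y ∈ E, x ≠ y ∧ (x - y).valuation = n}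

/-- `E ⊆ ℚ_p` is `p`-homogeneous. -/
def PHomogeneous (p : ℕ) [Fact p.Prime] (E : Set ℚ_[p]) : Prop :=
  ∀ n ∈ pOrders p E, ∀ x ∈ E, ∀ t : ℕ, t < p →
    ∃ y ∈ E, ‖y - x - (t : ℚ_[p]) * (p : ℚ_[p]) ^ n‖ ≤ (p : ℝ) ^ (-(n + 1))

/-!
Equal orders are turned into an isometry in two steps.

A back-and-forth (Zorn) argument first gives an isometric bijection `Φ : E → E'`. To extend a
partial isometry to a new point `x`, let `r` be the distance from `x` to its domain, attained at
`a`; as `r` is realised in `E`, hence (equal orders) in `E'`, homogeneity puts `p` points of `E'`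
near `Φ a`, pairwise at distance `r`. Since `ℚ_p` has no `p + 1` points pairwise at the same
distance (their residues modulo `p` would be distinct), one of these `p` points is not close to
the image of any point of the domain at distance `r` from `x`, and it is a valid image of `x`.

Then `z ↦ z - a + Φ a`, with `a` a nearest point of `E` to `z` chosen constantly on balls (nearest
points exist because bounded orders make `E` uniformly discrete), is a bijective isometry of `ℚ_p`
extending `Φ`. The key fact is that the distance from a point to a homogeneous set is never a
distance between two of its points: otherwise the nearest point would have `p` neighbours in the
set which, together with `z`, would be `p + 1` points pairwise at the same distance.
-/

open Metric

namespace IsUltrametricDist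

variable {G : Type*} [SeminormedAddCommGroup G] [IsUltrametricDist G] {x y : G} {c : ℝ}

lemma norm_sub_le_max (x y : G) : ‖x - y‖ ≤ max ‖x‖ ‖y‖ := by
  simpa only [sub_eq_add_neg, norm_neg] using norm_add_le_max x (-y)

lemma norm_add_le_of_le_of_le (hx : ‖x‖ ≤ c) (hy : ‖y‖ ≤ c) : ‖x + y‖ ≤ c :=
  (norm_add_le_max x y).trans (max_le hx hy)

lemma norm_sub_le_of_le_of_le (hx : ‖x‖ ≤ c) (hy : ‖y‖ ≤ c) : ‖x - y‖ ≤ c :=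
  (norm_sub_le_max x y).trans (max_le hx hy)

lemma norm_add_eq_left_of_lt (h : ‖y‖ < ‖x‖) : ‖x + y‖ = ‖x‖ := by
  rw [norm_add_eq_max_of_norm_ne_norm h.ne', max_eq_left h.le]

/-- Moving `x` to `y` and `b` to `b'` with `a ↦ a'` as base point, where `a` is at least as close
to `x` as `b` is, the distance `‖x - b‖` can only change when `b` is as close to `x` as `a`. -/
lemma norm_sub_eq_and_lt_of_norm_sub_ne {x a b y a' b' : G} (hmin : ‖x - a‖ ≤ ‖x - b‖)
    (hab : ‖b' - a'‖ = ‖b - a‖) (hy : ‖y - a'‖ ≤ ‖x - a‖) (hne : ‖y - b'‖ ≠ ‖x - b‖) :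
    ‖x - b‖ = ‖x - a‖ ∧ ‖y - b'‖ < ‖x - a‖ := by
  rcases hmin.lt_or_eq with hlt | heq
  · refine absurd ?_ hne
    have hba : ‖b - a‖ = ‖x - b‖ := by
      rw [show b - a = -(x - b) + (x - a) by abel,
        norm_add_eq_left_of_lt (by rwa [norm_neg]), norm_neg]
    rw [show y - b' = -(b' - a') + (y - a') by abel,
      norm_add_eq_left_of_lt (by rw [norm_neg, hab, hba]; exact hy.trans_lt hlt),
      norm_neg, hab, hba]
  · refine ⟨heq.symm, lt_of_le_of_ne ?_ (heq ▸ hne)⟩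
    rw [show y - b' = (y - a') - (b' - a') by abel]
    refine norm_sub_le_of_le_of_le hy (hab ▸ ?_)
    rw [show b - a = (x - a) - (x - b) by abel]
    exact norm_sub_le_of_le_of_le le_rfl heq.ge

end IsUltrametricDist

open IsUltrametricDist

section NearestPoint

variable {X : Type*} [MetricSpace X] {E : Set X}

/-- A nearest point of `E` to `z`, chosen as a function of the ball `closedBall z (infDist z E)`
alone, so that points sharing that ball share their nearest point. -/
def nearestPoint (E : Set X) (z : X) : X :=
  @Classical.epsilon X ⟨z⟩ (· ∈ E ∩ closedBall z (infDist z E))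

lemma nearestPoint_eq_of_dist_le [IsUltrametricDist X] {z w : X}
    (hd : infDist z E = infDist w E) (hzw : dist w z ≤ infDist z E) :
    nearestPoint E z = nearestPoint E w := by
  rw [nearestPoint, nearestPoint, closedBall_eq_of_mem (mem_closedBall.2 hzw), hd]

variable [ProperSpace X] (hE : IsClosed E) (hne : E.Nonempty)
include hE hne

lemma nearestPoint_spec (z : X) :
    nearestPoint E z ∈ E ∧ dist z (nearestPoint E z) = infDist z E := by
  obtain ⟨a, ha, hdist⟩ := hE.exists_infDist_eq_dist hne z
  have hex : ∃ a, a ∈ E ∩ closedBall z (infDist z E) :=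
    ⟨a, ha, by rw [mem_closedBall, dist_comm]; exact hdist.ge⟩
  obtain ⟨hmem, hle⟩ : nearestPoint E z ∈ E ∩ closedBall z (infDist z E) :=
    @Classical.epsilon_spec X _ hex
  exact ⟨hmem, le_antisymm (by rwa [dist_comm]) (infDist_le_dist_of_mem hmem)⟩

lemma nearestPoint_of_mem {z : X} (hz : z ∈ E) : nearestPoint E z = z := by
  have h := (nearestPoint_spec hE hne z).2
  rw [infDist_zero_of_mem hz, dist_eq_zero] at h
  exact h.symm

lemma infDist_le_max_dist [IsUltrametricDist X] (z w : X) :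
    infDist w E ≤ max (dist w z) (infDist z E) := by
  obtain ⟨ha, hza⟩ := nearestPoint_spec hE hne z
  calc infDist w E ≤ dist w (nearestPoint E z) := infDist_le_dist_of_mem ha
    _ ≤ max (dist w z) (dist z (nearestPoint E z)) := IsUltrametricDist.dist_triangle_max _ _ _
    _ = max (dist w z) (infDist z E) := by rw [hza]

end NearestPoint

section Extension

variable {G : Type*} [NormedAddCommGroup G] [ProperSpace G] {E E' : Set G} {Φ : G → G}

def InfDistAvoidsDist (E : Set G) : Prop :=
  ∀ w, ∀ x ∈ E, ∀ y ∈ E, x ≠ y → ‖x - y‖ ≠ infDist w E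

def extendByNearestPoint (E : Set G) (Φ : G → G) (z : G) : G :=
  z - nearestPoint E z + Φ (nearestPoint E z)

lemma norm_sub_nearestPoint (hE : IsClosed E) (hne : E.Nonempty) (z : G) :
    ‖z - nearestPoint E z‖ = infDist z E := by
  rw [← dist_eq_norm]
  exact (nearestPoint_spec hE hne z).2

variable [IsUltrametricDist G]

lemma norm_nearestPoint_sub_lt_of_infDist_lt (hE : IsClosed E) (hne : E.Nonempty)
    (hgap : InfDistAvoidsDist E) {z w : G} (hlt : infDist z E < infDist w E)
    (hzw : ‖z - w‖ ≤ infDist w E) :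
    ‖z - w‖ = infDist w E ∧ ‖nearestPoint E z - nearestPoint E w‖ < infDist w E := by
  have hwz : ‖z - w‖ = infDist w E := by
    refine le_antisymm hzw ?_
    have := infDist_le_max_dist hE hne z w
    rw [dist_eq_norm, norm_sub_rev] at this
    exact (le_max_iff.1 this).resolve_right hlt.not_ge
  refine ⟨hwz, ?_⟩
  obtain ⟨ha, -⟩ := nearestPoint_spec hE hne z
  obtain ⟨hb, -⟩ := nearestPoint_spec hE hne w
  have hle : ‖nearestPoint E z - nearestPoint E w‖ ≤ infDist w E := by
    rw [show nearestPoint E z - nearestPoint E w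
        = (z - w) - ((z - nearestPoint E z) - (w - nearestPoint E w)) by abel]
    refine norm_sub_le_of_le_of_le hwz.le (norm_sub_le_of_le_of_le ?_ ?_)
    · exact (norm_sub_nearestPoint hE hne z).trans_le hlt.le
    · exact (norm_sub_nearestPoint hE hne w).le
  rcases eq_or_ne (nearestPoint E z) (nearestPoint E w) with hab | hab
  · simpa [hab] using infDist_nonneg.trans_lt hlt
  · exact hle.lt_of_ne (hgap w _ ha _ hb hab)

lemma norm_extendByNearestPoint_sub (hE : IsClosed E) (hne : E.Nonempty)
    (hgap : InfDistAvoidsDist E) (hΦ : ∀ x ∈ E, ∀ y ∈ E, ‖Φ x - Φ y‖ = ‖x - y‖) (z w : G) :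
    ‖extendByNearestPoint E Φ z - extendByNearestPoint E Φ w‖ = ‖z - w‖ := by
  wlog hzw : infDist z E ≤ infDist w E generalizing z w
  · rw [norm_sub_rev, this w z (le_of_not_ge hzw), norm_sub_rev]
  set a := nearestPoint E z
  set b := nearestPoint E w
  have hΦab : ‖Φ a - Φ b‖ = ‖a - b‖ :=
    hΦ a (nearestPoint_spec hE hne z).1 b (nearestPoint_spec hE hne w).1
  have hza : ‖z - a‖ = infDist z E := norm_sub_nearestPoint hE hne z
  have hwb : ‖w - b‖ = infDist w E := norm_sub_nearestPoint hE hne w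
  have hsmall : ‖(z - a) - (w - b)‖ ≤ infDist w E :=
    norm_sub_le_of_le_of_le (hza.le.trans hzw) hwb.le
  rcases lt_or_ge (infDist w E) ‖z - w‖ with hfar | hnear
  · -- `z` and `w` are farther apart than from `E`, so their nearest points are as well
    have hab : ‖a - b‖ = ‖z - w‖ := by
      rw [show a - b = (z - w) + -((z - a) - (w - b)) by abel]
      exact norm_add_eq_left_of_lt (by rw [norm_neg]; exact hsmall.trans_lt hfar)
    rw [show extendByNearestPoint E Φ z - extendByNearestPoint E Φ w
        = (Φ a - Φ b) + ((z - a) - (w - b)) by simp only [extendByNearestPoint, a, b]; abel,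
      norm_add_eq_left_of_lt (by rw [hΦab, hab]; exact hsmall.trans_lt hfar), hΦab, hab]
  rcases hzw.eq_or_lt with hd | hlt
  · have hab : a = b := nearestPoint_eq_of_dist_le hd (by rwa [dist_eq_norm, norm_sub_rev, hd])
    simp only [extendByNearestPoint, a, b, hab, add_sub_add_right_eq_sub, sub_sub_sub_cancel_right]
  · obtain ⟨hwz, hab⟩ := norm_nearestPoint_sub_lt_of_infDist_lt hE hne hgap hlt hnear
    rw [show extendByNearestPoint E Φ z - extendByNearestPoint E Φ w
        = -(w - b) + ((z - a) + (Φ a - Φ b)) by simp only [extendByNearestPoint, a, b]; abel,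
      norm_add_eq_left_of_lt, norm_neg, hwb, hwz]
    rw [norm_neg, hwb]
    exact (norm_add_le_max _ _).trans_lt (max_lt (hza ▸ hlt) (hΦab ▸ hab))

lemma infDist_sub_add_eq (hE : IsClosed E) (hne : E.Nonempty) (hgap' : InfDistAvoidsDist E')
    (hmaps : Set.MapsTo Φ E E') (hΦ : ∀ x ∈ E, ∀ y ∈ E, ‖Φ x - Φ y‖ = ‖x - y‖)
    {z' c : G} (hc : c ∈ E) (hcz : ‖z' - Φ c‖ ≤ infDist z' E') :
    infDist (z' - Φ c + c) E = infDist z' E' := by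
  set r := infDist z' E'
  set u := z' - Φ c + c
  have huc : ‖u - c‖ = r := by
    rw [show u - c = z' - Φ c by simp only [u]; abel]
    exact le_antisymm hcz (by rw [← dist_eq_norm]; exact infDist_le_dist_of_mem (hmaps hc))
  refine le_antisymm (by rw [← huc, ← dist_eq_norm]; exact infDist_le_dist_of_mem hc) ?_
  by_contra! hlt
  -- a point of `E` closer to `u` than `c` would sit at distance `r` from `c`,
  -- and `Φ` would carry that distance into `E'`
  obtain ⟨hx, hux⟩ := nearestPoint_spec hE hne u
  set x := nearestPoint E u
  rw [dist_eq_norm] at hux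
  have hΦxc : ‖Φ x - Φ c‖ = r := by
    rw [hΦ x hx c hc, show x - c = (u - c) + -(u - x) by abel,
      norm_add_eq_left_of_lt (by rwa [norm_neg, huc, hux]), huc]
  refine hgap' z' (Φ x) (hmaps hx) (Φ c) (hmaps hc) (fun h => ?_) hΦxc
  rw [h, sub_self, norm_zero] at hΦxc
  exact ((norm_nonneg _).trans_lt (hux ▸ hlt)).ne hΦxc

lemma surjective_extendByNearestPoint (hE : IsClosed E) (hne : E.Nonempty) (hE' : IsClosed E')
    (hgap' : InfDistAvoidsDist E') (hΦ : ∀ x ∈ E, ∀ y ∈ E, ‖Φ x - Φ y‖ = ‖x - y‖)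
    (himg : Φ '' E = E') : Function.Surjective (extendByNearestPoint E Φ) := by
  intro z'
  have hmaps : Set.MapsTo Φ E E' := himg ▸ Set.mapsTo_image Φ E
  set r := infDist z' E'
  obtain ⟨hb', hzb'⟩ := nearestPoint_spec hE' (himg ▸ hne.image Φ) z'
  obtain ⟨b, hb, hbb'⟩ : nearestPoint E' z' ∈ Φ '' E := by rwa [himg]
  rw [← hbb', dist_eq_norm] at hzb'
  -- the preimage is `z' - Φ a + a`, where `a` is the nearest point of `E` to `z' - Φ b + b`
  set z₀ := z' - Φ b + b
  have hz₀ : infDist z₀ E = r := infDist_sub_add_eq hE hne hgap' hmaps hΦ hb hzb'.le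
  obtain ⟨ha, hz₀a⟩ := nearestPoint_spec hE hne z₀
  set a := nearestPoint E z₀
  rw [dist_eq_norm, hz₀] at hz₀a
  have hab : ‖a - b‖ ≤ r := by
    rw [show a - b = (z₀ - b) - (z₀ - a) by abel, show z₀ - b = z' - Φ b by simp only [z₀]; abel]
    exact norm_sub_le_of_le_of_le hzb'.le hz₀a.le
  have hz'a : ‖z' - Φ a‖ ≤ r := by
    rw [show z' - Φ a = (z' - Φ b) - (Φ a - Φ b) by abel]
    exact norm_sub_le_of_le_of_le hzb'.le (by rwa [hΦ a ha b hb])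
  have hz : infDist (z' - Φ a + a) E = r := infDist_sub_add_eq hE hne hgap' hmaps hΦ ha hz'a
  have hnear : nearestPoint E (z' - Φ a + a) = a := by
    refine nearestPoint_eq_of_dist_le (hz.trans hz₀.symm) ?_
    rw [dist_eq_norm, hz,
      show z₀ - (z' - Φ a + a) = (Φ a - Φ b) - (a - b) by simp only [z₀]; abel]
    exact norm_sub_le_of_le_of_le (by rwa [hΦ a ha b hb]) hab
  refine ⟨z' - Φ a + a, ?_⟩
  rw [extendByNearestPoint, hnear]
  abel

theorem exists_bijective_isometry_image_eq (hE : IsClosed E) (hne : E.Nonempty)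
    (hE' : IsClosed E') (hgap : InfDistAvoidsDist E) (hgap' : InfDistAvoidsDist E')
    (hΦ : ∀ x ∈ E, ∀ y ∈ E, ‖Φ x - Φ y‖ = ‖x - y‖) (himg : Φ '' E = E') :
    ∃ f : G → G, Function.Bijective f ∧ (∀ x y, ‖f x - f y‖ = ‖x - y‖) ∧ f '' E = E' := by
  have hiso := norm_extendByNearestPoint_sub hE hne hgap hΦ
  refine ⟨extendByNearestPoint E Φ, ⟨fun x y hxy => ?_,
    surjective_extendByNearestPoint hE hne hE' hgap' hΦ himg⟩, hiso, ?_⟩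
  · simpa [hxy, sub_eq_zero, eq_comm] using hiso x y
  · rw [← himg]
    refine Set.image_congr fun x hx => ?_
    rw [extendByNearestPoint, nearestPoint_of_mem hE hne hx, sub_self, zero_add]

end Extension

section BackAndForth

variable {X : Type*} [MetricSpace X] {E E' : Set X}

def IsPartialIsometry (R : Set (X × X)) : Prop :=
  R.Pairwise fun q q' => dist q.2 q'.2 = dist q.1 q'.1

lemma IsPartialIsometry.dist_eq {R : Set (X × X)} (hR : IsPartialIsometry R) {q q' : X × X}
    (hq : q ∈ R) (hq' : q' ∈ R) : dist q.2 q'.2 = dist q.1 q'.1 := by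
  rcases eq_or_ne q q' with rfl | hne
  · simp
  · exact hR hq hq' hne

def ExtendsPartialIsometries (E E' : Set X) : Prop :=
  ∀ R ⊆ E ×ˢ E', IsPartialIsometry R → ∀ x ∈ E, x ∉ Prod.fst '' R →
    ∃ y ∈ E', ∀ q ∈ R, dist y q.2 = dist x q.1

theorem exists_isometric_image_eq (hext : ExtendsPartialIsometries E E')
    (hext' : ExtendsPartialIsometries E' E) :
    ∃ Φ : X → X, (∀ x ∈ E, ∀ y ∈ E, dist (Φ x) (Φ y) = dist x y) ∧ Φ '' E = E' := by
  obtain ⟨M, hM⟩ := zorn_subset {R | R ⊆ E ×ˢ E' ∧ IsPartialIsometry R} fun c hcS hc =>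
    ⟨⋃₀ c, ⟨Set.sUnion_subset fun R hR => (hcS hR).1,
      (Set.pairwise_sUnion hc.directedOn).2 fun R hR => (hcS hR).2⟩,
      fun _ => Set.subset_sUnion_of_mem⟩
  obtain ⟨hMsub, hMiso⟩ := hM.prop
  have hmem : ∀ x ∈ E, ∀ y ∈ E', (∀ q ∈ M, dist y q.2 = dist x q.1) → (x, y) ∈ M := by
    intro x hx y hy hd
    refine hM.2 ⟨Set.insert_subset (Set.mk_mem_prod hx hy) hMsub, hMiso.insert fun q hq _ =>
      ⟨hd q hq, by rw [dist_comm, hd q hq, dist_comm]⟩⟩ (Set.subset_insert _ _)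
      (Set.mem_insert _ _)
  have hdom : ∀ x, ∃ y, x ∈ E → (x, y) ∈ M := by
    intro x
    by_cases hx : x ∈ E
    · by_contra! h
      obtain ⟨y, hy, hd⟩ := hext M hMsub hMiso x hx (by rintro ⟨q, hq, rfl⟩; exact (h q.2).2 hq)
      exact (h y).2 (hmem x hx y hy hd)
    · exact ⟨x, fun h => absurd h hx⟩
  have hran : ∀ y ∈ E', ∃ x, (x, y) ∈ M := by
    intro y hy
    by_contra! h
    obtain ⟨x, hx, hd⟩ := hext' (Prod.swap ⁻¹' M) (fun q hq => (hMsub hq).symm)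
      (fun q hq q' hq' hne => (hMiso hq hq' (Prod.swap_injective.ne hne)).symm) y hy
      (by rintro ⟨q, hq, rfl⟩; exact h q.2 hq)
    exact h x (hmem x hx y hy fun q hq => (hd q.swap (by simpa using hq)).symm)
  choose Φ hΦ using hdom
  refine ⟨Φ, fun x hx y hy => hMiso.dist_eq (hΦ x hx) (hΦ y hy),
    subset_antisymm ?_ fun y hy => ?_⟩
  · rintro _ ⟨x, hx, rfl⟩
    exact (hMsub (hΦ x hx)).2
  · obtain ⟨x, hxy⟩ := hran y hy
    have hx : x ∈ E := (hMsub hxy).1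
    exact ⟨x, hx, dist_eq_zero.1 (by simpa using hMiso.dist_eq (hΦ x hx) hxy)⟩

end BackAndForth

section Padic

variable {p : ℕ} [Fact p.Prime] {E E' : Set ℚ_[p]}

lemma Padic.valuation_eq_of_norm_eq {x y : ℚ_[p]} (hx : x ≠ 0) (hy : y ≠ 0) (h : ‖x‖ = ‖y‖) :
    x.valuation = y.valuation := by
  have hp : (1 : ℝ) < p := mod_cast (Fact.out : p.Prime).one_lt
  rw [Padic.norm_eq_zpow_neg_valuation hx, Padic.norm_eq_zpow_neg_valuation hy] at h
  exact neg_injective (zpow_right_injective₀ (by positivity) hp.ne' h)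

lemma Padic.norm_natCast_sub_natCast_eq_one {t s : ℕ} (ht : t < p) (hs : s < p) (hts : t ≠ s) :
    ‖(t : ℚ_[p]) - s‖ = 1 := by
  rw [show (t : ℚ_[p]) - s = ((t - s : ℤ) : ℚ_[p]) by push_cast; ring]
  refine le_antisymm (Padic.norm_int_le_one _) (not_lt.1 fun h => hts ?_)
  have := Int.eq_zero_of_dvd_of_natAbs_lt_natAbs (Padic.norm_intCast_lt_one_iff.1 h) (by omega)
  omega

lemma Padic.card_le_of_pairwise_norm_sub_eq {ι : Type*} [Fintype ι] {u : ι → ℚ_[p]} {r : ℝ}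
    (hr : r ≠ 0) (hu : Pairwise fun i j => ‖u i - u j‖ = r) : Fintype.card ι ≤ p := by
  rcases subsingleton_or_nontrivial ι with hι | hι
  · exact Fintype.card_le_one_iff_subsingleton.2 hι |>.trans (Fact.out : p.Prime).one_lt.le
  obtain ⟨i₀, j₀, hij⟩ := exists_pair_ne ι
  set c := u j₀ - u i₀
  have hc : ‖c‖ = r := hu hij.symm
  have hle : ∀ i, ‖(u i - u i₀) / c‖ ≤ 1 := fun i => by
    rcases eq_or_ne i i₀ with rfl | h
    · simp
    · rw [norm_div, hu h, hc, div_self hr]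
  -- the residues mod `p` of the `(u i - u i₀) / c` are pairwise distinct
  let v : ι → ℤ_[p] := fun i => ⟨(u i - u i₀) / c, hle i⟩
  have hinj : Function.Injective fun i => PadicInt.toZMod (v i) := by
    intro i j hij
    by_contra hne
    have hmem : v i - v j ∈ IsLocalRing.maximalIdeal ℤ_[p] := by
      rw [← PadicInt.ker_toZMod, RingHom.mem_ker, map_sub, sub_eq_zero]
      exact hij
    rw [IsLocalRing.mem_maximalIdeal, PadicInt.mem_nonunits, PadicInt.norm_def,
      PadicInt.coe_sub, ← sub_div, sub_sub_sub_cancel_right, norm_div, hu hne, hc,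
      div_self hr] at hmem
    exact hmem.false
  simpa using Fintype.card_le_of_injective _ hinj

lemma Padic.exists_norm_sub_ne_of_pairwise {r : ℝ} (hr : r ≠ 0) {u : Fin p → ℚ_[p]}
    (hu : Pairwise fun t s => ‖u t - u s‖ = r) (x : ℚ_[p]) : ∃ t, ‖x - u t‖ ≠ r := by
  by_contra! hx
  have := Padic.card_le_of_pairwise_norm_sub_eq (u := fun o : Option (Fin p) => o.elim x u) hr <| by
    rintro (_ | t) (_ | s) h
    · exact absurd rfl h
    · exact hx s
    · rw [norm_sub_rev]; exact hx t
    · exact hu fun e => h (congrArg some e)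
  simp at this

lemma isClosed_of_subset_of_bddAbove_pOrders (hbdd : BddAbove (pOrders p E)) {A : Set ℚ_[p]}
    (hA : A ⊆ E) : IsClosed A := by
  obtain ⟨N, hN⟩ := hbdd
  have hp : (1 : ℝ) ≤ p := mod_cast (Fact.out : p.Prime).one_lt.le
  refine isClosed_of_pairwise_le_dist (ε := (p : ℝ) ^ (-N)) (by positivity)
    fun x hx y hy hxy => ?_
  dsimp only
  rw [dist_eq_norm, Padic.norm_eq_zpow_neg_valuation (sub_ne_zero.2 hxy)]
  exact zpow_le_zpow_right₀ hp (neg_le_neg (hN ⟨x, hA hx, y, hA hy, hxy, rfl⟩))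

lemma PHomogeneous.exists_pairwise_norm_sub_eq (hE : PHomogeneous p E) {n : ℤ}
    (hn : n ∈ pOrders p E) {a : ℚ_[p]} (ha : a ∈ E) :
    ∃ u : Fin p → ℚ_[p], (∀ t, u t ∈ E ∧ ‖u t - a‖ ≤ (p : ℝ) ^ (-n)) ∧
      Pairwise fun t s => ‖u t - u s‖ = (p : ℝ) ^ (-n) := by
  have hp : (1 : ℝ) < p := mod_cast (Fact.out : p.Prime).one_lt
  choose u hu hclose using fun t : Fin p => hE n hn a ha t t.isLt
  have hlt : (p : ℝ) ^ (-(n + 1)) < (p : ℝ) ^ (-n) := zpow_lt_zpow_right₀ hp (by omega)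
  refine ⟨u, fun t => ⟨hu t, ?_⟩, fun t s hts => ?_⟩
  · rw [show u t - a = (u t - a - t * (p : ℚ_[p]) ^ n) + t * (p : ℚ_[p]) ^ n by ring]
    refine norm_add_le_of_le_of_le ((hclose t).trans hlt.le) ?_
    rw [norm_mul, Padic.norm_p_zpow]
    exact mul_le_of_le_one_left (by positivity) (norm_natCast_le_one ℚ_[p] _)
  · have hdigit : ‖((t : ℚ_[p]) - s) * (p : ℚ_[p]) ^ n‖ = (p : ℝ) ^ (-n) := by
      rw [norm_mul, Padic.norm_natCast_sub_natCast_eq_one t.isLt s.isLt (Fin.val_injective.ne hts),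
        Padic.norm_p_zpow, one_mul]
    have herr := (norm_sub_le_of_le_of_le (hclose t) (hclose s)).trans_lt hlt
    dsimp only
    rw [show u t - u s = ((t : ℚ_[p]) - s) * (p : ℚ_[p]) ^ n
        + ((u t - a - t * (p : ℚ_[p]) ^ n) - (u s - a - s * (p : ℚ_[p]) ^ n)) by ring,
      norm_add_eq_left_of_lt (hdigit ▸ herr), hdigit]

lemma PHomogeneous.infDistAvoidsDist (hE : PHomogeneous p E) (hne : E.Nonempty)
    (hbdd : BddAbove (pOrders p E)) : InfDistAvoidsDist E := by
  intro w x hx y hy hxy hdist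
  have hr : ‖x - y‖ = (p : ℝ) ^ (-(x - y).valuation) :=
    Padic.norm_eq_zpow_neg_valuation (sub_ne_zero.2 hxy)
  obtain ⟨ha, hwa⟩ :=
    nearestPoint_spec (isClosed_of_subset_of_bddAbove_pOrders hbdd subset_rfl) hne w
  obtain ⟨u, hu, hpair⟩ := hE.exists_pairwise_norm_sub_eq ⟨x, hx, y, hy, hxy, rfl⟩ ha
  rw [← hr] at hu hpair
  obtain ⟨t, ht⟩ :=
    Padic.exists_norm_sub_ne_of_pairwise (norm_ne_zero_iff.2 (sub_ne_zero.2 hxy)) hpair w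
  refine ht (le_antisymm ?_ ?_)
  · rw [show w - u t = (w - nearestPoint E w) - (u t - nearestPoint E w) by abel]
    exact norm_sub_le_of_le_of_le (by rw [← dist_eq_norm, hwa, hdist]) (hu t).2
  · rw [hdist, ← dist_eq_norm]
    exact infDist_le_dist_of_mem (hu t).1

lemma PHomogeneous.extendsPartialIsometries (hE' : PHomogeneous p E') (hne' : E'.Nonempty)
    (hbdd : BddAbove (pOrders p E)) (hsub : pOrders p E ⊆ pOrders p E') :
    ExtendsPartialIsometries E E' := by
  intro R hR hRiso x hx hxR
  rcases (Prod.fst '' R).eq_empty_or_nonempty with hR₀ | hRne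
  · obtain ⟨y, hy⟩ := hne'
    exact ⟨y, hy, fun q hq => absurd (Set.mem_image_of_mem _ hq) (hR₀ ▸ Set.notMem_empty _)⟩
  have hRE : Prod.fst '' R ⊆ E := by
    rintro _ ⟨q, hq, rfl⟩
    exact (hR hq).1
  obtain ⟨_, ⟨q₀, hq₀, rfl⟩, hxq₀⟩ :=
    (isClosed_of_subset_of_bddAbove_pOrders hbdd hRE).exists_infDist_eq_dist hRne x
  have hmin : ∀ q ∈ R, ‖x - q₀.1‖ ≤ ‖x - q.1‖ := fun q hq => by
    rw [← dist_eq_norm, ← dist_eq_norm, ← hxq₀]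
    exact infDist_le_dist_of_mem (Set.mem_image_of_mem _ hq)
  have hne : x ≠ q₀.1 := fun h => hxR ⟨q₀, hq₀, h.symm⟩
  set r := ‖x - q₀.1‖
  have hr : r = (p : ℝ) ^ (-(x - q₀.1).valuation) :=
    Padic.norm_eq_zpow_neg_valuation (sub_ne_zero.2 hne)
  obtain ⟨u, hu, hpair⟩ :=
    hE'.exists_pairwise_norm_sub_eq (hsub ⟨x, hx, q₀.1, (hR hq₀).1, hne, rfl⟩) (hR hq₀).2
  rw [← hr] at hu hpair
  have hfail : ∀ t, ∀ q ∈ R, ‖u t - q.2‖ ≠ ‖x - q.1‖ → ‖x - q.1‖ = r ∧ ‖u t - q.2‖ < r :=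
    fun t q hq => norm_sub_eq_and_lt_of_norm_sub_ne (hmin q hq)
      (by rw [← dist_eq_norm, ← dist_eq_norm]; exact hRiso.dist_eq hq hq₀) (hu t).2
  by_contra! hcon
  choose q hqR hq using fun t => hcon (u t) (hu t).1
  simp only [dist_eq_norm] at hq
  have hqpair : Pairwise fun t s => ‖(q t).1 - (q s).1‖ = r := by
    intro t s hts
    rw [← dist_eq_norm, ← hRiso.dist_eq (hqR t) (hqR s), dist_eq_norm,
      show (q t).2 - (q s).2 = (u t - u s) + ((u s - (q s).2) - (u t - (q t).2)) by abel,
      norm_add_eq_left_of_lt, hpair hts]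
    rw [hpair hts]
    exact (norm_sub_le_max _ _).trans_lt
      (max_lt (hfail s (q s) (hqR s) (hq s)).2 (hfail t (q t) (hqR t) (hq t)).2)
  obtain ⟨t, ht⟩ :=
    Padic.exists_norm_sub_ne_of_pairwise (norm_ne_zero_iff.2 (sub_ne_zero.2 hne)) hqpair x
  exact ht (hfail t (q t) (hqR t) (hq t)).1

lemma pOrders_image_of_norm_sub_eq {f : ℚ_[p] → ℚ_[p]} (hf : ∀ x y, ‖f x - f y‖ = ‖x - y‖)
    (E : Set ℚ_[p]) : pOrders p (f '' E) = pOrders p E := by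
  have hne : ∀ {x y}, x ≠ y → f x ≠ f y := fun {x y} hxy h => hxy <| by
    simpa [h, eq_comm, sub_eq_zero] using hf x y
  ext n
  constructor
  · rintro ⟨_, ⟨x, hx, rfl⟩, _, ⟨y, hy, rfl⟩, hfxy, rfl⟩
    have hxy : x ≠ y := fun h => hfxy (h ▸ rfl)
    exact ⟨x, hx, y, hy, hxy, Padic.valuation_eq_of_norm_eq (sub_ne_zero.2 hxy)
      (sub_ne_zero.2 hfxy) (hf x y).symm⟩
  · rintro ⟨x, hx, y, hy, hxy, rfl⟩
    exact ⟨f x, Set.mem_image_of_mem f hx, f y, Set.mem_image_of_mem f hy, hne hxy,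
      Padic.valuation_eq_of_norm_eq (sub_ne_zero.2 (hne hxy)) (sub_ne_zero.2 hxy) (hf x y)⟩

end Padic

/-- two nonempty `p`-homogeneous sets with admissible `p`-orders bounded above
have the same admissible `p`-orders iff some bijective isometric transformation of `ℚ_p` maps
one onto the other. -/
theorem pHomogeneous_orders_eq_iff_isometric
    (p : ℕ) [Fact p.Prime] (E E' : Set ℚ_[p])
    (hne : E.Nonempty) (hne' : E'.Nonempty)
    (hhom : PHomogeneous p E) (hhom' : PHomogeneous p E')
    (hbdd : BddAbove (pOrders p E)) (hbdd' : BddAbove (pOrders p E')) :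
    pOrders p E = pOrders p E' ↔
      ∃ f : ℚ_[p] → ℚ_[p], Function.Bijective f ∧
        (∀ x y : ℚ_[p], ‖f x - f y‖ = ‖x - y‖) ∧ f '' E = E' := by
  constructor
  · intro hord
    obtain ⟨Φ, hΦ, himg⟩ := exists_isometric_image_eq
      (hhom'.extendsPartialIsometries hne' hbdd hord.subset)
      (hhom.extendsPartialIsometries hne hbdd' hord.symm.subset)
    simp only [dist_eq_norm] at hΦ
    exact exists_bijective_isometry_image_eq
      (isClosed_of_subset_of_bddAbove_pOrders hbdd subset_rfl) hne
      (isClosed_of_subset_of_bddAbove_pOrders hbdd' subset_rfl)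
      (hhom.infDistAvoidsDist hne hbdd) (hhom'.infDistAvoidsDist hne' hbdd') hΦ himg
  · rintro ⟨f, -, hf, rfl⟩
    exact (pOrders_image_of_norm_sub_eq hf E).symm
end
end

section
/- Let p be a prime. Every isometric transformation of ℚ_p, i.e. every map f : ℚ_p → ℚ_p satisfying |f(x) − f(y)|_p = |x − y|_p for all x, y ∈ ℚ_p, is surjective. -/
noncomputable section

lemma compact_isometry_surjOn {X : Type*} [MetricSpace X] {K : Set X} (hK : IsCompact K)
    {g : X → X} (hmaps : Set.MapsTo g K K)
    (hiso : ∀ x ∈ K, ∀ y ∈ K, dist (g x) (g y) = dist x y) :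
    Set.SurjOn g K K := by
  intro y hy
  set u : ℕ → X := fun n => g^[n] y with hu
  have humem : ∀ n, u n ∈ K := by
    intro n
    induction n with
    | zero => exact hy
    | succ n ih => simpa [hu, Function.iterate_succ_apply'] using hmaps ih
  have hdist : ∀ m n : ℕ, dist (u (n + m)) (u n) = dist (u m) y := by
    intro m n
    induction n with
    | zero => simp [hu]
    | succ n ih =>
        have heq : n + 1 + m = (n + m) + 1 := by ring
        rw [heq]
        have h1 : u ((n + m) + 1) = g (u (n + m)) := by
          simp [hu, Function.iterate_succ_apply']
        have h2 : u (n + 1) = g (u n) := by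
          simp [hu, Function.iterate_succ_apply']
        rw [h1, h2, hiso _ (humem _) _ (humem _), ih]
  obtain ⟨a, -, φ, hφ, hconv⟩ := hK.tendsto_subseq humem
  -- g is continuous on K, so g '' K is compact hence closed
  have hlip : LipschitzOnWith 1 g K := by
    intro x hx z hz
    rw [edist_dist, edist_dist, hiso _ hx _ hz]
    simp
  have hclosed : IsClosed (g '' K) := (hK.image_of_continuousOn hlip.continuousOn).isClosed
  have : y ∈ closure (g '' K) := by
    rw [Metric.mem_closure_iff]
    intro ε hε
    have := Metric.tendsto_atTop.mp hconv (ε / 2) (by linarith)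
    obtain ⟨N, hN⟩ := this
    have h1 := hN N le_rfl
    have h2 := hN (N + 1) (by omega)
    have hk : φ (N + 1) = φ N + (φ (N + 1) - φ N) := by
      have := hφ (show N < N+1 by omega); omega
    have hkpos : 1 ≤ φ (N + 1) - φ N := by
      have := hφ (show N < N+1 by omega); omega
    set k := φ (N + 1) - φ N with hkdef
    refine ⟨u k, ?_, ?_⟩
    · have : u k = g (u (k - 1)) := by
        have : k = (k - 1) + 1 := by omega
        rw [this]
        simp [hu, Function.iterate_succ_apply']
      rw [this]
      exact Set.mem_image_of_mem g (humem _)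
    · have hd : dist (u (φ N + k)) (u (φ N)) = dist (u k) y := hdist k (φ N)
      rw [← hk] at hd
      rw [dist_comm y (u k), ← hd]
      calc dist (u (φ (N + 1))) (u (φ N))
          ≤ dist (u (φ (N + 1))) a + dist (u (φ N)) a := dist_triangle_right _ _ _
        _ < ε / 2 + ε / 2 := add_lt_add h2 h1
        _ = ε := by ring
  rwa [hclosed.closure_eq] at this

/-- every isometric transformation of `ℚ_p` is surjective. -/
theorem isometric_transformation_surjective
    (p : ℕ) [Fact p.Prime] (f : ℚ_[p] → ℚ_[p])
    (hf : ∀ x y : ℚ_[p], ‖f x - f y‖ = ‖x - y‖) :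
    Function.Surjective f := by
  intro y
  set g : ℚ_[p] → ℚ_[p] := fun x => f x - f 0 with hg
  have hgiso : ∀ x z : ℚ_[p], dist (g x) (g z) = dist x z := by
    intro x z
    rw [dist_eq_norm, show g x - g z = f x - f z from by simp only [hg]; ring,
      hf x z, ← dist_eq_norm]
  have hgnorm : ∀ x : ℚ_[p], ‖g x‖ = ‖x‖ := by
    intro x
    have := hgiso x 0
    simpa [hg, dist_eq_norm] using this
  set r := ‖y - f 0‖ with hr
  set K : Set ℚ_[p] := Metric.closedBall 0 r with hK
  have hKc : IsCompact K := isCompact_closedBall 0 r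
  have hmaps : Set.MapsTo g K K := by
    intro x hx
    simp only [hK, Metric.mem_closedBall, dist_zero_right] at hx ⊢
    rw [hgnorm]; exact hx
  have hsurj := compact_isometry_surjOn hKc hmaps (fun x _ z _ => hgiso x z)
  have hyK : y - f 0 ∈ K := by
    simp [hK, hr]
  obtain ⟨x, -, hx⟩ := hsurj hyK
  exact ⟨x, by have : f x - f 0 = y - f 0 := hx; linear_combination this⟩
end
end

section
/- Let p be a prime, γ ≥ 1 an integer, C ⊆ {0, 1, …, p^γ − 1} a nonempty set of integers, and Ω = ⋃_{c∈C} (c + p^γ ℤ_p). Then Ω tiles ℚ_p by translation if and only if the image of C in ℤ/p^γℤ tiles ℤ/p^γℤ. -/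
open MeasureTheory

noncomputable section

/-!
Ω is the image in ℚ_p of the preimage of C mod p^γ under the reduction map ℤ_p → ℤ/p^γℤ.
For a subgroup ι : L ↪ G and a surjection φ : L ↠ Q, a set of the form ι(φ⁻¹(A)) tiles G if
and only if A tiles Q: a tiling complement of A lifts along φ and is spread over a set of
representatives of G / L, and conversely a complement in G meets L in a set whose image under φ
is a complement of A. Moreover Ω is a union of balls of radius p^(-γ), so whether x - t ∈ Ω
does not change when x moves by less than p^(-γ); hence the set where a tiling fails is open and an almost
everywhere tiling is a tiling everywhere.
-/

def IsTranslationTiling {G : Type*} [AddGroup G] (Ω T : Set G) : Prop :=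
  ∀ x, ∃! t, t ∈ T ∧ x - t ∈ Ω

theorem isTranslationTiling_iff_existsUnique_add {Q : Type*} [AddCommGroup Q] (A T : Set Q) :
    IsTranslationTiling A T ↔
      ∀ x, ∃! ct : Q × Q, ct.1 ∈ A ∧ ct.2 ∈ T ∧ ct.1 + ct.2 = x := by
  refine forall_congr' fun x => ⟨?_, ?_⟩
  · rintro ⟨t, ⟨htT, hxt⟩, huniq⟩
    refine ⟨(x - t, t), ⟨hxt, htT, sub_add_cancel x t⟩, ?_⟩
    rintro ⟨c, s⟩ ⟨hc, hs, rfl⟩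
    obtain rfl : s = t := huniq s ⟨hs, by rwa [add_sub_cancel_right]⟩
    simp
  · rintro ⟨⟨c, t⟩, ⟨hc, htT, rfl⟩, huniq⟩
    refine ⟨t, ⟨htT, by rwa [add_sub_cancel_right]⟩, fun s ⟨hs, hcs⟩ => ?_⟩
    exact congrArg Prod.snd (huniq (c + t - s, s) ⟨hcs, hs, sub_add_cancel _ _⟩)

theorem IsTranslationTiling.of_ae {G : Type*} [SeminormedAddCommGroup G] [MeasurableSpace G]
    {μ : Measure G} [μ.IsOpenPosMeasure] {Ω T : Set G} {r : ℝ} (hr : 0 < r)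
    (hΩ : ∀ x y, dist x y < r → x ∈ Ω → y ∈ Ω)
    (h : ∀ᵐ x ∂μ, ∃! t, t ∈ T ∧ x - t ∈ Ω) : IsTranslationTiling Ω T := by
  have hmem : ∀ x y t, dist x y < r → (x - t ∈ Ω ↔ y - t ∈ Ω) := fun x y t hxy =>
    ⟨hΩ _ _ (by rwa [dist_sub_right]), hΩ _ _ (by rwa [dist_sub_right, dist_comm])⟩
  intro x
  by_contra hx
  have hball : Metric.ball x r ⊆ {y | ¬ ∃! t, t ∈ T ∧ y - t ∈ Ω} := by
    intro y hy hy'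
    refine hx ?_
    simpa only [hmem x y _ (Metric.mem_ball'.1 hy)] using hy'
  exact (Metric.isOpen_ball.measure_ne_zero μ (Metric.nonempty_ball.2 hr))
    (measure_mono_null hball (ae_iff.1 h))

section
variable {G L Q : Type*} [AddCommGroup G] [AddCommGroup L] [AddCommGroup Q]
  {ι : L →+ G} {φ : L →+ Q} {A : Set Q}

theorem IsTranslationTiling.of_image_preimage (hι : Function.Injective ι)
    (hφ : Function.Surjective φ) {T : Set G} (h : IsTranslationTiling (ι '' (φ ⁻¹' A)) T) :
    IsTranslationTiling A (φ '' (ι ⁻¹' T)) := by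
  intro z
  obtain ⟨k, rfl⟩ := hφ z
  obtain ⟨t, ⟨htT, j, hjA, hj⟩, huniq⟩ := h (ι k)
  have ht : t = ι (k - j) := by rw [map_sub, hj, sub_sub_cancel]
  subst ht
  refine ⟨φ (k - j), ⟨⟨k - j, htT, rfl⟩, by rwa [← map_sub, sub_sub_cancel]⟩, ?_⟩
  rintro _ ⟨⟨m, hmT, rfl⟩, hmA⟩
  have hm : ι m = ι (k - j) :=
    huniq (ι m) ⟨hmT, k - m, by rwa [Set.mem_preimage, map_sub], map_sub ι k m⟩
  rw [hι hm]

theorem IsTranslationTiling.image_preimage (hι : Function.Injective ι)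
    (hφ : Function.Surjective φ) {T : Set Q} (h : IsTranslationTiling A T) :
    IsTranslationTiling (ι '' (φ ⁻¹' A))
      {t | ∃ q : G ⧸ ι.range, ∃ s ∈ T, t = q.out + ι (Function.surjInv hφ s)} := by
  have hrange : ∀ (x : G) (q : G ⧸ ι.range), (x : G ⧸ ι.range) = q ↔ ∃ l, ι l = x - q.out := by
    intro x q
    have h := QuotientAddGroup.eq_iff_sub_mem (N := ι.range) (x := x) (y := q.out)
    rw [QuotientAddGroup.out_eq'] at h
    exact h
  intro x
  obtain ⟨l, hl⟩ := (hrange x x).1 rfl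
  obtain ⟨s, ⟨hsT, hsA⟩, huniq⟩ := h (φ l)
  refine ⟨(x : G ⧸ ι.range).out + ι (Function.surjInv hφ s), ⟨⟨_, s, hsT, rfl⟩,
    l - Function.surjInv hφ s, ?_, ?_⟩, ?_⟩
  · rwa [Set.mem_preimage, map_sub, Function.surjInv_eq hφ]
  · rw [map_sub, hl, sub_sub]
  rintro _ ⟨⟨q, s', hs'T, rfl⟩, j, hjA, hj⟩
  obtain rfl : (x : G ⧸ ι.range) = q :=
    (hrange x q).2 ⟨j + Function.surjInv hφ s', by rw [map_add, hj]; abel⟩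
  have hjl : j = l - Function.surjInv hφ s' :=
    hι (by rw [map_sub, hl, hj]; abel)
  rw [huniq s' ⟨hs'T, by rwa [hjl, Set.mem_preimage, map_sub, Function.surjInv_eq hφ] at hjA⟩]

theorem exists_isTranslationTiling_image_preimage_iff (hι : Function.Injective ι)
    (hφ : Function.Surjective φ) :
    (∃ T : Set G, IsTranslationTiling (ι '' (φ ⁻¹' A)) T) ↔
      ∃ T : Set Q, IsTranslationTiling A T :=
  ⟨fun ⟨_, h⟩ => ⟨_, h.of_image_preimage hι hφ⟩, fun ⟨_, h⟩ => ⟨_, h.image_preimage hι hφ⟩⟩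

end

section

variable {p : ℕ} [Fact p.Prime]

theorem PadicInt.norm_sub_le_pow_iff_toZModPow_eq (n : ℕ) (x y : ℤ_[p]) :
    ‖x - y‖ ≤ (p : ℝ) ^ (-(n : ℤ)) ↔ toZModPow n x = toZModPow n y := by
  rw [norm_le_pow_iff_mem_span_pow, ← ker_toZModPow, RingHom.mem_ker, map_sub, sub_eq_zero]

theorem Padic.norm_sub_natCast_le_pow_iff (n c : ℕ) (x : ℚ_[p]) :
    ‖x - c‖ ≤ (p : ℝ) ^ (-(n : ℤ)) ↔
      ∃ y : ℤ_[p], (y : ℚ_[p]) = x ∧ PadicInt.toZModPow n y = c := by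
  have hcast (y : ℤ_[p]) : ‖(y : ℚ_[p]) - c‖ = ‖y - (c : ℤ_[p])‖ := by
    rw [PadicInt.norm_def]; push_cast; rfl
  constructor
  · intro hxc
    have hx : ‖x‖ ≤ 1 := by
      rw [← sub_add_cancel x c]
      refine (Padic.nonarchimedean _ _).trans (max_le (hxc.trans ?_) ?_)
      · exact zpow_le_one_of_nonpos₀ (by exact_mod_cast (Fact.out : p.Prime).one_le) (by simp)
      · exact_mod_cast Padic.norm_int_le_one (c : ℤ)
    refine ⟨(⟨x, hx⟩ : ℤ_[p]), rfl, ?_⟩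
    rw [← map_natCast (PadicInt.toZModPow n) c]
    exact (PadicInt.norm_sub_le_pow_iff_toZModPow_eq n _ _).1 ((hcast _).symm.le.trans hxc)
  · rintro ⟨y, rfl, hy⟩
    rwa [hcast, PadicInt.norm_sub_le_pow_iff_toZModPow_eq, map_natCast]

end

theorem compactOpen_tiles_iff_zmod_tile_general
    (p γ : ℕ) [Fact p.Prime]
    (C : Finset ℕ)
    [MeasurableSpace ℚ_[p]]
    (μ : Measure ℚ_[p]) [μ.IsAddHaarMeasure]
    (Ω : Set ℚ_[p])
    (hΩ : Ω = ⋃ c ∈ C, {x : ℚ_[p] | ‖x - (c : ℚ_[p])‖ ≤ (p : ℝ) ^ (-(γ : ℤ))}) :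
    (∃ T : Set ℚ_[p], ∀ᵐ x ∂μ, ∃! t, t ∈ T ∧ x - t ∈ Ω) ↔
    (∃ T : Set (ZMod (p ^ γ)), ∀ x : ZMod (p ^ γ),
      ∃! ct : ZMod (p ^ γ) × ZMod (p ^ γ),
        ct.1 ∈ C.image (fun c : ℕ => (c : ZMod (p ^ γ))) ∧ ct.2 ∈ T ∧ ct.1 + ct.2 = x) := by
  have hr : 0 < (p : ℝ) ^ (-(γ : ℤ)) := zpow_pos (by exact_mod_cast (Fact.out : p.Prime).pos) _
  have hΩ_nbhd : ∀ x y, dist x y < (p : ℝ) ^ (-(γ : ℤ)) → x ∈ Ω → y ∈ Ω := by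
    simp only [hΩ, Set.mem_iUnion₂, Set.mem_ofPred_eq, ← dist_eq_norm]
    rintro x y hxy ⟨c, hc, hx⟩
    exact ⟨c, hc, (dist_triangle_max y x c).trans (max_le (dist_comm x y ▸ hxy.le) hx)⟩
  have hΩ_eq : Ω = PadicInt.Coe.ringHom.toAddMonoidHom ''
      ((PadicInt.toZModPow γ).toAddMonoidHom ⁻¹' (C.image fun c : ℕ => (c : ZMod (p ^ γ)))) := by
    ext x
    simp only [hΩ, Set.mem_iUnion₂, Set.mem_ofPred_eq, Padic.norm_sub_natCast_le_pow_iff]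
    constructor
    · rintro ⟨c, hc, y, rfl, hy⟩
      exact ⟨y, Finset.mem_image.2 ⟨c, hc, hy.symm⟩, rfl⟩
    · rintro ⟨y, hy, rfl⟩
      obtain ⟨c, hc, hcy⟩ := Finset.mem_image.1 hy
      exact ⟨c, hc, y, rfl, hcy.symm⟩
  calc (∃ T : Set ℚ_[p], ∀ᵐ x ∂μ, ∃! t, t ∈ T ∧ x - t ∈ Ω)
      ↔ ∃ T, IsTranslationTiling Ω T :=
        exists_congr fun T => ⟨.of_ae hr hΩ_nbhd, ae_of_all μ⟩
    _ ↔ ∃ T : Set (ZMod (p ^ γ)),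
          IsTranslationTiling ↑(C.image fun c : ℕ => (c : ZMod (p ^ γ))) T := by
        rw [hΩ_eq]
        exact exists_isTranslationTiling_image_preimage_iff Subtype.coe_injective
          (ZMod.ringHom_surjective _)
    _ ↔ _ := exists_congr fun T => isTranslationTiling_iff_existsUnique_add _ T

/-- `Ω = ⋃_{c∈C}(c + p^γ ℤ_p)` tiles `ℚ_p` by translation iff the image of `C`
in `ℤ/p^γℤ` tiles `ℤ/p^γℤ`. -/
theorem compactOpen_tiles_iff_zmod_tile
    (p γ : ℕ) [Fact p.Prime] (hγ : 1 ≤ γ)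
    (C : Finset ℕ) (hCne : C.Nonempty) (hCsub : ∀ c ∈ C, c < p ^ γ)
    [MeasurableSpace ℚ_[p]] [BorelSpace ℚ_[p]]
    (μ : Measure ℚ_[p]) [μ.IsAddHaarMeasure]
    (Ω : Set ℚ_[p])
    (hΩ : Ω = ⋃ c ∈ C, {x : ℚ_[p] | ‖x - (c : ℚ_[p])‖ ≤ (p : ℝ) ^ (-(γ : ℤ))}) :
    (∃ T : Set ℚ_[p], ∀ᵐ x ∂μ, ∃! t, t ∈ T ∧ x - t ∈ Ω) ↔
    (∃ T : Set (ZMod (p ^ γ)), ∀ x : ZMod (p ^ γ),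
      ∃! ct : ZMod (p ^ γ) × ZMod (p ^ γ),
        ct.1 ∈ C.image (fun c : ℕ => (c : ZMod (p ^ γ))) ∧ ct.2 ∈ T ∧ ct.1 + ct.2 = x) :=
  compactOpen_tiles_iff_zmod_tile_general p γ C μ Ω hΩ
end
end

section
/- Let p be a prime, ψ a standard character of ℚ_p, and F a nonempty finite subset of ℚ_p. Then the uniform probability measure on F is a spectral measure — that is, there exists Λ ⊆ ℚ_p with #Λ = #F such that ∑_{c∈F} ψ((λ − λ′)c) = 0 for all distinct λ, λ′ ∈ Λ — if and only if #F = p^{#I_F}, where I_F = {v_p(x − y) : x, y ∈ F, x ≠ y}. -/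
noncomputable section

/-- A standard character of `ℚ_p`. -/
def IsStdChar (p : ℕ) [Fact p.Prime] (ψ : ℚ_[p] → ℂ) : Prop :=
  Continuous ψ ∧ (∀ x y, ψ (x + y) = ψ x * ψ y) ∧ (∀ x, ‖ψ x‖ = 1) ∧
    (∀ x : ℚ_[p], ‖x‖ ≤ 1 → ψ x = 1) ∧ ∃ x : ℚ_[p], ‖x‖ ≤ p ∧ ψ x ≠ 1

/-!
A finite `E ⊆ ℚ_p` is a tree: if `m` is its least admissible order, `E` lies in a closed ball of
radius `p ^ (-m)`, the disjoint union of `p` open balls of that radius, and the pieces of `E` in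
them have admissible orders in `I_E \ {m}`. Hence `#E ≤ p ^ #I_E`, with equality iff every
node of this tree has all `p` branches.

A vanishing sum `∑_{c ∈ E} ψ (t c)` is a vanishing `ℕ`-combination of `p ^ k`-th roots of unity;
as `Φ_{p ^ k} = ∑_{i < p} X ^ (i p ^ (k-1))`, its multiplicities do not change under multiplication
by a `p`-th root of unity, i.e. `E` meets all `p` sub-balls of each ball of radius `p / ‖t‖`
centred in `E`. If `Λ` is a spectrum for `F`, then `F` is one for `Λ` (a square matrix with
orthogonal rows has orthogonal columns), so a pair of `F` at order `m` yields a pair of `Λ` at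
order `-m - 1`, which makes `F` branch at order `m`: `#F ≥ p ^ #I_F`. Conversely, if
`#F = p ^ #I_F`, the numbers `∑_{m ∈ I_F} a_m p ^ (-m-1)` with `0 ≤ a_m < p` form a spectrum:
their differences `t` have `‖t‖ = p ^ (m+1)` with `m ∈ I_F`, and on the `p` equal branches of
`F` at level `m` the phases of `ψ (t ·)` run through the `p`-th roots of unity.
-/

open Finset Polynomial

namespace Padic

variable {p : ℕ} [Fact p.Prime]

theorem one_lt_natCast_prime : (1 : ℝ) < p := by exact_mod_cast (Fact.out : p.Prime).one_lt

theorem natCast_prime_pos : (0 : ℝ) < p := zero_lt_one.trans one_lt_natCast_prime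

theorem norm_sub_lt_of_lt {x y z : ℚ_[p]} {r : ℝ} (hxy : ‖x - y‖ < r) (hyz : ‖y - z‖ < r) :
    ‖x - z‖ < r := by
  simpa only [dist_eq_norm] using (dist_triangle_max x y z).trans_lt (max_lt hxy hyz)

theorem norm_eq_zpow_neg_iff {x : ℚ_[p]} (hx : x ≠ 0) {m : ℤ} :
    ‖x‖ = (p : ℝ) ^ (-m) ↔ x.valuation = m := by
  rw [norm_eq_zpow_neg_valuation hx, zpow_right_inj₀ natCast_prime_pos one_lt_natCast_prime.ne',
    neg_inj]

theorem norm_mul_le_one_iff {t x : ℚ_[p]} {m : ℤ} (ht : ‖t‖ = (p : ℝ) ^ m) :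
    ‖t * x‖ ≤ 1 ↔ ‖x‖ ≤ (p : ℝ) ^ (-m) := by
  rw [norm_mul, ht, zpow_neg, ← le_inv_mul_iff₀ (zpow_pos natCast_prime_pos m), mul_one]

theorem norm_natCast_sub_natCast_eq_one_s19 {a b : ℕ} (ha : a < p) (hb : b < p) (hab : a ≠ b) :
    ‖(a : ℚ_[p]) - b‖ = 1 := by
  have hcast : ‖(a : ℚ_[p]) - b‖ = ‖((b - a : ℤ) : ℚ_[p])‖ := by
    rw [norm_sub_rev]; push_cast; rfl
  rw [hcast]
  refine le_antisymm (norm_int_le_one _) (not_lt.1 fun h => hab ?_)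
  exact (Nat.modEq_iff_dvd.2 (norm_intCast_lt_one_iff.1 h)).eq_of_lt_of_lt ha hb

theorem exists_natCast_norm_sub_lt_one {u : ℚ_[p]} (hu : ‖u‖ ≤ 1) : ∃ a < p, ‖u - a‖ < 1 := by
  obtain ⟨a, ha, hua⟩ := PadicInt.exists_mem_range (show ℤ_[p] from ⟨u, hu⟩)
  rw [IsLocalRing.mem_maximalIdeal, PadicInt.mem_nonunits, PadicInt.norm_def, PadicInt.coe_sub,
    PadicInt.coe_natCast] at hua
  exact ⟨a, ha, hua⟩

end Padic

theorem Polynomial.coeff_mul_pow_eq_coeff_zero_of_cyclotomic_dvd {R : Type*} [CommRing R]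
    [Nontrivial R] {p k : ℕ} (hp : p.Prime) {f : R[X]} (hf : cyclotomic (p ^ (k + 1)) R ∣ f)
    (hdeg : f.natDegree < p ^ (k + 1)) {j : ℕ} (hj : j < p) : f.coeff (j * p ^ k) = f.coeff 0 := by
  obtain ⟨g, rfl⟩ := hf
  rcases eq_or_ne g 0 with rfl | hg
  · simp
  have hpk : 0 < p ^ k := pow_pos hp.pos k
  have hdeg_g : g.natDegree < p ^ k := by
    rw [(cyclotomic.monic _ R).natDegree_mul' hg, natDegree_cyclotomic,
      Nat.totient_prime_pow_succ hp, pow_succ] at hdeg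
    have : p ^ k * p = p ^ k * (p - 1) + p ^ k := by
      rw [Nat.mul_sub_one, Nat.sub_add_cancel (Nat.le_mul_of_pos_right _ hp.pos)]
    omega
  -- `cyclotomic (p ^ (k + 1)) = ∑ i < p, X ^ (i * p ^ k)` and `g` has degree `< p ^ k`.
  have hcoeff : ∀ i < p, (cyclotomic (p ^ (k + 1)) R * g).coeff (i * p ^ k) = g.coeff 0 := by
    intro i hi
    rw [cyclotomic_prime_pow_eq_geom_sum hp, sum_mul, finsetSum_coeff,
      sum_eq_single_of_mem i (mem_range.2 hi)]
    · rw [← pow_mul, coeff_X_pow_mul', if_pos (by rw [mul_comm]), mul_comm, Nat.sub_self]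
    · intro l _ hli
      rw [← pow_mul, coeff_X_pow_mul']
      split_ifs with hle
      · have hli' : l < i :=
          lt_of_le_of_ne (Nat.le_of_mul_le_mul_left (by rwa [mul_comm i] at hle) hpk) hli
        apply coeff_eq_zero_of_natDegree_lt
        calc g.natDegree < p ^ k := hdeg_g
          _ ≤ (i - l) * p ^ k := Nat.le_mul_of_pos_left _ (Nat.sub_pos_of_lt hli')
          _ = i * p ^ k - p ^ k * l := by rw [Nat.sub_mul, mul_comm l]
      · rfl
  rw [hcoeff j hj, ← hcoeff 0 hp.pos, zero_mul]

theorem IsPrimitiveRoot.card_filter_eq_of_sum_pow_eq_zero {K : Type*} [Field K] [CharZero K]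
    {p k : ℕ} (hp : p.Prime) {ξ : K} (hξ : IsPrimitiveRoot ξ (p ^ (k + 1))) {ι : Type*}
    (s : Finset ι) (n : ι → ℕ) (hn : ∀ i ∈ s, n i < p ^ (k + 1)) (h : ∑ i ∈ s, ξ ^ n i = 0)
    {j : ℕ} (hj : j < p) : #{i ∈ s | n i = j * p ^ k} = #{i ∈ s | n i = 0} := by
  classical
  set f : ℚ[X] := ∑ i ∈ s, X ^ n i
  have hcoeff (m : ℕ) : f.coeff m = #{i ∈ s | n i = m} := by
    simp [f, finsetSum_coeff, coeff_X_pow, sum_boole, eq_comm]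
  have hdvd : cyclotomic (p ^ (k + 1)) ℚ ∣ f := by
    rw [cyclotomic_eq_minpoly_rat hξ (pow_pos hp.pos _)]
    exact minpoly.dvd ℚ ξ (by simp [f, h])
  have hdeg : f.natDegree < p ^ (k + 1) :=
    (natDegree_sum_le_of_forall_le s _ (n := p ^ (k + 1) - 1) fun i hi => by
      rw [natDegree_X_pow]; have := hn i hi; omega).trans_lt
      (Nat.sub_one_lt (pow_pos hp.pos _).ne')
  exact_mod_cast (hcoeff _).symm.trans
    ((coeff_mul_pow_eq_coeff_zero_of_cyclotomic_dvd hp hdvd hdeg hj).trans (hcoeff 0))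

namespace IsStdChar

variable {p : ℕ} [Fact p.Prime] {ψ : ℚ_[p] → ℂ} (hψ : IsStdChar p ψ)
include hψ

theorem map_add (x y : ℚ_[p]) : ψ (x + y) = ψ x * ψ y := hψ.2.1 x y

theorem ne_zero (x : ℚ_[p]) : ψ x ≠ 0 := by
  intro h
  simpa [h] using hψ.2.2.1 x

theorem map_eq_one_of_norm_le_one {x : ℚ_[p]} (hx : ‖x‖ ≤ 1) : ψ x = 1 := hψ.2.2.2.1 x hx

theorem map_zero : ψ 0 = 1 := hψ.map_eq_one_of_norm_le_one (by simp)

theorem map_natCast_mul (n : ℕ) (x : ℚ_[p]) : ψ (n * x) = ψ x ^ n := by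
  induction n with
  | zero => simp [hψ.map_zero]
  | succ n ih => rw [Nat.cast_succ, add_one_mul, hψ.map_add, ih, pow_succ]

theorem map_sub (x y : ℚ_[p]) : ψ (x - y) = ψ x * (ψ y)⁻¹ := by
  rw [eq_mul_inv_iff_mul_eq₀ (hψ.ne_zero y), ← hψ.map_add, sub_add_cancel]

theorem mul_star_map (x y : ℚ_[p]) : ψ x * star (ψ y) = ψ (x - y) := by
  have hy : star (ψ y) = (ψ y)⁻¹ := by
    rw [Complex.star_def, Complex.inv_def, ← Complex.sq_norm, hψ.2.2.1, one_pow, inv_one,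
      Complex.ofReal_one, mul_one]
  rw [hy, hψ.map_sub]

theorem exists_eq_pow_of_norm_le {x a : ℚ_[p]} (hxa : ‖x‖ ≤ ‖a‖) : ∃ m : ℕ, ψ x = ψ a ^ m := by
  rcases eq_or_ne a 0 with rfl | ha
  · rw [norm_zero, norm_le_zero_iff] at hxa
    exact ⟨0, by rw [hxa, pow_zero, hψ.map_zero]⟩
  have hu : ‖x / a‖ ≤ 1 := by rwa [norm_div, div_le_one (norm_pos_iff.2 ha)]
  obtain ⟨m, hm⟩ := PadicInt.denseRange_natCast.exists_dist_lt (show ℤ_[p] from ⟨x / a, hu⟩)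
    (inv_pos.2 (norm_pos_iff.2 ha))
  rw [dist_eq_norm, PadicInt.norm_def, PadicInt.coe_sub, PadicInt.coe_natCast] at hm
  change ‖x / a - m‖ < ‖a‖⁻¹ at hm
  have hm' : ‖x - m * a‖ < 1 :=
    calc ‖x - m * a‖ = ‖x / a - m‖ * ‖a‖ := by rw [← norm_mul, sub_mul, div_mul_cancel₀ _ ha]
      _ < ‖a‖⁻¹ * ‖a‖ := by gcongr
      _ = 1 := inv_mul_cancel₀ (norm_ne_zero_iff.2 ha)
  refine ⟨m, ?_⟩
  rw [← sub_add_cancel x (m * a), hψ.map_add, hψ.map_eq_one_of_norm_le_one hm'.le, one_mul,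
    hψ.map_natCast_mul]

theorem map_eq_one_iff (x : ℚ_[p]) : ψ x = 1 ↔ ‖x‖ ≤ 1 := by
  refine ⟨fun h => ?_, hψ.map_eq_one_of_norm_le_one⟩
  by_contra hx
  -- `‖x‖ > 1` means `‖x‖ ≥ p`, so `ψ` is nontrivial on `‖y‖ ≤ ‖x‖`, where it is a power of `ψ x`.
  obtain ⟨x₀, hx₀, hψx₀⟩ := hψ.2.2.2.2
  have hpx : (p : ℝ) ≤ ‖x‖ := by
    simpa using (Padic.norm_le_pow_iff_norm_lt_pow_add_one x 0).not.1 (by simpa using hx)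
  obtain ⟨m, hm⟩ := hψ.exists_eq_pow_of_norm_le (hx₀.trans hpx)
  exact hψx₀ (by rw [hm, h, one_pow])

theorem map_eq_map_iff (x y : ℚ_[p]) : ψ x = ψ y ↔ ‖x - y‖ ≤ 1 := by
  rw [← hψ.map_eq_one_iff, hψ.map_sub, mul_inv_eq_one₀ (hψ.ne_zero y)]

theorem exists_isPrimitiveRoot (k : ℕ) :
    ∃ ξ : ℂ, IsPrimitiveRoot ξ (p ^ (k + 1)) ∧
      ∀ x : ℚ_[p], ‖x‖ ≤ (p : ℝ) ^ (k + 1) → ∃ n < p ^ (k + 1), ψ x = ξ ^ n := by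
  have hp : (p : ℚ_[p]) ≠ 0 := Nat.cast_ne_zero.2 (Fact.out : p.Prime).ne_zero
  set a : ℚ_[p] := ((p : ℚ_[p]) ^ (k + 1))⁻¹
  have ha : ‖a‖ = (p : ℝ) ^ (k + 1) := by
    rw [norm_inv, Padic.norm_p_pow, zpow_neg, inv_inv, zpow_natCast]
  have hord : orderOf (ψ a) = p ^ (k + 1) := by
    apply orderOf_eq_prime_pow
    · have hpa : ((p ^ k : ℕ) : ℚ_[p]) * a = (p : ℚ_[p])⁻¹ := by
        simp only [a, Nat.cast_pow]
        field_simp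
        ring
      rw [← hψ.map_natCast_mul, hpa, hψ.map_eq_one_iff, norm_inv, Padic.norm_p, inv_inv, not_le]
      exact Padic.one_lt_natCast_prime
    · have hpa : ((p ^ (k + 1) : ℕ) : ℚ_[p]) * a = 1 := by
        simp only [a, Nat.cast_pow]
        field_simp
      rw [← hψ.map_natCast_mul, hpa]
      exact hψ.map_eq_one_of_norm_le_one (by simp)
  refine ⟨ψ a, hord ▸ IsPrimitiveRoot.orderOf _, fun x hx => ?_⟩
  obtain ⟨m, hm⟩ := hψ.exists_eq_pow_of_norm_le (hx.trans ha.ge)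
  refine ⟨m % p ^ (k + 1), Nat.mod_lt _ (pow_pos (Fact.out : p.Prime).pos _), ?_⟩
  rw [hm, ← hord, pow_mod_orderOf]

theorem isPrimitiveRoot_of_norm_eq {x : ℚ_[p]} (hx : ‖x‖ = p) : IsPrimitiveRoot (ψ x) p := by
  have hord : orderOf (ψ x) = p := by
    apply orderOf_eq_prime
    · rw [← hψ.map_natCast_mul, hψ.map_eq_one_iff, norm_mul, Padic.norm_p, hx,
        inv_mul_cancel₀ Padic.natCast_prime_pos.ne']
    · rw [Ne, hψ.map_eq_one_iff, hx, not_le]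
      exact Padic.one_lt_natCast_prime
  exact hord ▸ IsPrimitiveRoot.orderOf (ψ x)

end IsStdChar

section FiniteSets

variable {p : ℕ} [Fact p.Prime]

open Classical in
def pOrdersFinset (E : Finset ℚ_[p]) : Finset ℤ :=
  E.offDiag.image fun q => (q.1 - q.2).valuation

theorem coe_pOrdersFinset (E : Finset ℚ_[p]) : (pOrdersFinset E : Set ℤ) = pOrders p E := by
  ext m
  simp [pOrdersFinset, pOrders, and_assoc]

theorem mem_pOrdersFinset {E : Finset ℚ_[p]} {m : ℤ} :
    m ∈ pOrdersFinset E ↔ ∃ x ∈ E, ∃ y ∈ E, x ≠ y ∧ ‖x - y‖ = (p : ℝ) ^ (-m) := by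
  rw [← mem_coe, coe_pOrdersFinset, pOrders, Set.mem_ofPred_eq]
  simp only [mem_coe]
  refine exists_congr fun x => and_congr_right fun _ => exists_congr fun y =>
    and_congr_right fun _ => and_congr_right fun hxy => ?_
  exact (Padic.norm_eq_zpow_neg_iff (sub_ne_zero.2 hxy)).symm

theorem norm_sub_le_zpow_neg_min' {E : Finset ℚ_[p]} (hne : (pOrdersFinset E).Nonempty)
    {x y : ℚ_[p]} (hx : x ∈ E) (hy : y ∈ E) :
    ‖x - y‖ ≤ (p : ℝ) ^ (-(pOrdersFinset E).min' hne) := by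
  rcases eq_or_ne x y with rfl | hxy
  · rw [sub_self, norm_zero]; positivity
  have hxy' := Padic.norm_eq_zpow_neg_valuation (sub_ne_zero.2 hxy)
  rw [hxy']
  exact zpow_le_zpow_right₀ Padic.one_lt_natCast_prime.le
    (neg_le_neg (min'_le _ _ (mem_pOrdersFinset.2 ⟨x, hx, y, hy, hxy, hxy'⟩)))

theorem pOrdersFinset_subset_erase {F E : Finset ℚ_[p]} (hFE : F ⊆ E) {m : ℤ}
    (h : ∀ x ∈ F, ∀ y ∈ F, ‖x - y‖ < (p : ℝ) ^ (-m)) :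
    pOrdersFinset F ⊆ (pOrdersFinset E).erase m := by
  intro n hn
  obtain ⟨x, hx, y, hy, hxy, hnorm⟩ := mem_pOrdersFinset.1 hn
  refine mem_erase.2 ⟨?_, mem_pOrdersFinset.2 ⟨x, hFE hx, y, hFE hy, hxy, hnorm⟩⟩
  rintro rfl
  exact (h x hx y hy).ne hnorm

/-- The points of `E` in the `a`-th of the `p` open balls of radius `p ^ (-m)` that make up the
closed ball of radius `p ^ (-m)` around `x`. -/
def subBall (E : Finset ℚ_[p]) (x : ℚ_[p]) (m : ℤ) (a : ℕ) : Finset ℚ_[p] :=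
  {c ∈ E | ‖c - (x + a * (p : ℚ_[p]) ^ m)‖ < (p : ℝ) ^ (-m)}

section SubBall

variable {E : Finset ℚ_[p]} {x : ℚ_[p]} {m : ℤ}

theorem subBall_subset (a : ℕ) : subBall E x m a ⊆ E := filter_subset _ _

theorem norm_sub_lt_of_mem_subBall {a : ℕ} {c c' : ℚ_[p]} (hc : c ∈ subBall E x m a)
    (hc' : c' ∈ subBall E x m a) : ‖c - c'‖ < (p : ℝ) ^ (-m) :=
  Padic.norm_sub_lt_of_lt (mem_filter.1 hc).2 (by rw [norm_sub_rev]; exact (mem_filter.1 hc').2)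

theorem pOrdersFinset_subBall_subset (a : ℕ) :
    pOrdersFinset (subBall E x m a) ⊆ (pOrdersFinset E).erase m :=
  pOrdersFinset_subset_erase (subBall_subset a) fun _ hc _ hc' => norm_sub_lt_of_mem_subBall hc hc'

theorem card_pOrdersFinset_subBall_le (hm : m ∈ pOrdersFinset E) (a : ℕ) :
    #(pOrdersFinset (subBall E x m a)) ≤ #(pOrdersFinset E) - 1 := by
  rw [← card_erase_of_mem hm]
  exact card_le_card (pOrdersFinset_subBall_subset a)

theorem disjoint_subBall {a b : ℕ} (ha : a < p) (hb : b < p) (hab : a ≠ b) :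
    Disjoint (subBall E x m a) (subBall E x m b) := by
  refine disjoint_left.2 fun c hca hcb => ?_
  have hlt : ‖(x + a * (p : ℚ_[p]) ^ m) - (x + b * (p : ℚ_[p]) ^ m)‖ < (p : ℝ) ^ (-m) :=
    Padic.norm_sub_lt_of_lt (by rw [norm_sub_rev]; exact (mem_filter.1 hca).2)
      (mem_filter.1 hcb).2
  rw [add_sub_add_left_eq_sub, ← sub_mul, norm_mul, Padic.norm_natCast_sub_natCast_eq_one_s19 ha hb hab,
    one_mul, Padic.norm_p_zpow] at hlt
  exact hlt.false

theorem exists_mem_subBall {c : ℚ_[p]} (hc : c ∈ E) (hcx : ‖c - x‖ ≤ (p : ℝ) ^ (-m)) :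
    ∃ a < p, c ∈ subBall E x m a := by
  have hp : (p : ℚ_[p]) ^ m ≠ 0 := zpow_ne_zero _ (Nat.cast_ne_zero.2 (Fact.out : p.Prime).ne_zero)
  have hu : ‖(c - x) / (p : ℚ_[p]) ^ m‖ ≤ 1 := by
    rw [norm_div, Padic.norm_p_zpow, div_le_one (zpow_pos Padic.natCast_prime_pos _)]
    exact hcx
  obtain ⟨a, ha, hua⟩ := Padic.exists_natCast_norm_sub_lt_one hu
  refine ⟨a, ha, mem_filter.2 ⟨hc, ?_⟩⟩
  have : c - (x + a * (p : ℚ_[p]) ^ m) = ((c - x) / (p : ℚ_[p]) ^ m - a) * (p : ℚ_[p]) ^ m := by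
    field_simp
    ring
  rw [this, norm_mul, Padic.norm_p_zpow]
  exact mul_lt_of_lt_one_left (zpow_pos Padic.natCast_prime_pos _) hua

theorem sum_eq_sum_sum_subBall {M : Type*} [AddCommMonoid M] (f : ℚ_[p] → M)
    (h : ∀ c ∈ E, ‖c - x‖ ≤ (p : ℝ) ^ (-m)) :
    ∑ c ∈ E, f c = ∑ a ∈ range p, ∑ c ∈ subBall E x m a, f c := by
  classical
  have hcover : (range p).biUnion (subBall E x m) = E := by
    refine (biUnion_subset.2 fun a _ => subBall_subset a).antisymm fun c hc => ?_
    obtain ⟨a, ha, hca⟩ := exists_mem_subBall hc (h c hc)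
    exact mem_biUnion.2 ⟨a, mem_range.2 ha, hca⟩
  conv_lhs => rw [← hcover]
  exact sum_biUnion fun a ha b hb hab => disjoint_subBall (mem_range.1 ha) (mem_range.1 hb) hab

theorem card_eq_sum_card_subBall (h : ∀ c ∈ E, ‖c - x‖ ≤ (p : ℝ) ^ (-m)) :
    #E = ∑ a ∈ range p, #(subBall E x m a) := by
  simpa only [card_eq_sum_ones] using sum_eq_sum_sum_subBall (fun _ => 1) h

end SubBall

theorem card_le_pow_card_pOrdersFinset (E : Finset ℚ_[p]) : #E ≤ p ^ #(pOrdersFinset E) := by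
  induction hk : #(pOrdersFinset E) using Nat.strong_induction_on generalizing E with
  | _ k ih =>
  rcases (pOrdersFinset E).eq_empty_or_nonempty with hemp | hne
  · rw [← hk, hemp, card_empty, pow_zero, card_le_one]
    refine fun x hx y hy => by_contra fun hxy => ?_
    simpa [hemp] using mem_pOrdersFinset.2
      ⟨x, hx, y, hy, hxy, Padic.norm_eq_zpow_neg_valuation (sub_ne_zero.2 hxy)⟩
  obtain ⟨x, hx, -⟩ := mem_pOrdersFinset.1 (min'_mem _ hne)
  set m := (pOrdersFinset E).min' hne
  have hk1 : 0 < k := hk ▸ card_pos.2 hne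
  have hsub (a : ℕ) : #(pOrdersFinset (subBall E x m a)) ≤ k - 1 :=
    hk ▸ card_pOrdersFinset_subBall_le (min'_mem _ hne) a
  have hball (a : ℕ) : #(subBall E x m a) ≤ p ^ (k - 1) :=
    (ih _ (by have := hsub a; omega) _ rfl).trans
      (pow_le_pow_right₀ (Fact.out : p.Prime).one_le (hsub a))
  calc #E = ∑ a ∈ range p, #(subBall E x m a) :=
        card_eq_sum_card_subBall fun c hc => norm_sub_le_zpow_neg_min' hne hc hx
    _ ≤ ∑ a ∈ range p, p ^ (k - 1) := sum_le_sum fun a _ => hball a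
    _ = p ^ k := by rw [sum_const, card_range, smul_eq_mul, ← pow_succ', Nat.sub_add_cancel hk1]

theorem card_subBall_of_card_eq_pow {E : Finset ℚ_[p]} (hE : #E = p ^ #(pOrdersFinset E))
    (hne : (pOrdersFinset E).Nonempty) {x : ℚ_[p]} (hx : x ∈ E) {a : ℕ} (ha : a < p) :
    #(subBall E x ((pOrdersFinset E).min' hne) a) = p ^ (#(pOrdersFinset E) - 1) := by
  set m := (pOrdersFinset E).min' hne
  set k := #(pOrdersFinset E)
  have hle (b : ℕ) : #(subBall E x m b) ≤ p ^ (k - 1) :=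
    (card_le_pow_card_pOrdersFinset _).trans (pow_le_pow_right₀ (Fact.out : p.Prime).one_le
      (card_pOrdersFinset_subBall_le (min'_mem _ hne) b))
  have hsum : ∑ b ∈ range p, #(subBall E x m b) = ∑ b ∈ range p, p ^ (k - 1) := by
    rw [← card_eq_sum_card_subBall fun c hc => norm_sub_le_zpow_neg_min' hne hc hx, hE, sum_const,
      card_range, smul_eq_mul, ← pow_succ', Nat.sub_add_cancel (card_pos.2 hne)]
  exact (sum_eq_sum_iff_of_le fun b _ => hle b).1 hsum a (mem_range.2 ha)

theorem pOrdersFinset_subBall_of_card_eq_pow {E : Finset ℚ_[p]}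
    (hE : #E = p ^ #(pOrdersFinset E)) (hne : (pOrdersFinset E).Nonempty) {x : ℚ_[p]}
    (hx : x ∈ E) {a : ℕ} (ha : a < p) :
    pOrdersFinset (subBall E x ((pOrdersFinset E).min' hne) a) =
      (pOrdersFinset E).erase ((pOrdersFinset E).min' hne) := by
  refine eq_of_subset_of_card_le (pOrdersFinset_subBall_subset a) ?_
  rw [card_erase_of_mem (min'_mem _ hne), ← Nat.pow_le_pow_iff_right (Fact.out : p.Prime).one_lt,
    ← card_subBall_of_card_eq_pow hE hne hx ha]
  exact card_le_pow_card_pOrdersFinset _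

-- Every vertex at level `m` of the tree of `E` has all `p` children.
def BranchesAt (E : Finset ℚ_[p]) (m : ℤ) : Prop :=
  ∀ x ∈ E, ∀ y : ℚ_[p], ‖y - x‖ ≤ (p : ℝ) ^ (-m) → ∃ c ∈ E, ‖c - y‖ < (p : ℝ) ^ (-m)

namespace BranchesAt

variable {E : Finset ℚ_[p]} {m : ℤ}

theorem subBall_nonempty (h : BranchesAt E m) {x : ℚ_[p]} (hx : x ∈ E) (a : ℕ) :
    (subBall E x m a).Nonempty := by
  have hnorm : ‖x + a * (p : ℚ_[p]) ^ m - x‖ ≤ (p : ℝ) ^ (-m) := by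
    rw [add_sub_cancel_left, norm_mul, Padic.norm_p_zpow]
    exact mul_le_of_le_one_left (zpow_pos Padic.natCast_prime_pos _).le
      (by simpa using Padic.norm_int_le_one (p := p) a)
  obtain ⟨c, hc, hcy⟩ := h x hx _ hnorm
  exact ⟨c, mem_filter.2 ⟨hc, hcy⟩⟩

theorem subBall_of_lt {n : ℤ} (h : BranchesAt E n) (hmn : m < n) (x : ℚ_[p]) (a : ℕ) :
    BranchesAt (subBall E x m a) n := by
  intro y hy z hzy
  obtain ⟨c, hc, hcz⟩ := h y (subBall_subset a hy) z hzy
  have hnm : (p : ℝ) ^ (-n) < (p : ℝ) ^ (-m) :=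
    zpow_lt_zpow_right₀ Padic.one_lt_natCast_prime (neg_lt_neg hmn)
  exact ⟨c, mem_filter.2 ⟨hc, Padic.norm_sub_lt_of_lt (hcz.trans hnm)
    (Padic.norm_sub_lt_of_lt (hzy.trans_lt hnm) (mem_filter.1 hy).2)⟩, hcz⟩

theorem exists_norm_sub_eq (h : BranchesAt E m) (hE : E.Nonempty) :
    ∃ x ∈ E, ∃ y ∈ E, x ≠ y ∧ ‖x - y‖ = (p : ℝ) ^ (-m) := by
  obtain ⟨x, hx⟩ := hE
  have hpm : ‖(p : ℚ_[p]) ^ m‖ = (p : ℝ) ^ (-m) := Padic.norm_p_zpow m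
  obtain ⟨c, hc, hcy⟩ := h x hx (x + (p : ℚ_[p]) ^ m) (by rw [add_sub_cancel_left, hpm])
  have hcx : ‖c - x‖ = (p : ℝ) ^ (-m) := by
    rw [← sub_add_sub_cancel c (x + (p : ℚ_[p]) ^ m) x, add_sub_cancel_left,
      Padic.add_eq_max_of_ne (hpm ▸ hcy.ne), max_eq_right (hpm ▸ hcy.le), hpm]
  refine ⟨c, hc, x, hx, fun hcx' => ?_, hcx⟩
  rw [hcx', sub_self, norm_zero] at hcx
  exact (zpow_pos Padic.natCast_prime_pos _).ne hcx

end BranchesAt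

theorem pow_card_le_card_of_branchesAt (S : Finset ℤ) {E : Finset ℚ_[p]} (hE : E.Nonempty)
    (h : ∀ m ∈ S, BranchesAt E m) : p ^ #S ≤ #E := by
  classical
  induction S using Finset.induction_on_min generalizing E with
  | empty => simpa using hE.card_pos
  | insert m S hlt ih =>
    obtain ⟨x, hx⟩ := hE
    have hm := h m (mem_insert_self m S)
    calc p ^ #(insert m S) = ∑ a ∈ range p, p ^ #S := by
          rw [card_insert_of_notMem fun hmS => (hlt m hmS).false, pow_succ', sum_const, card_range,
            smul_eq_mul]
      _ ≤ ∑ a ∈ range p, #(subBall E x m a) := sum_le_sum fun a _ =>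
          ih (hm.subBall_nonempty hx a) fun n hn =>
            (h n (mem_insert_of_mem hn)).subBall_of_lt (hlt n hn) x a
      _ = #((range p).biUnion (subBall E x m)) := (card_biUnion fun a ha b hb hab =>
          disjoint_subBall (mem_range.1 ha) (mem_range.1 hb) hab).symm
      _ ≤ #E := card_le_card (biUnion_subset.2 fun a _ => subBall_subset a)

theorem exists_card_eq_pow_forall_norm_sub_eq (I : Finset ℤ) :
    ∃ Λ : Finset ℚ_[p], #Λ = p ^ #I ∧
      ∀ l ∈ Λ, ∀ l' ∈ Λ, l ≠ l' → ∃ m ∈ I, ‖l - l'‖ = (p : ℝ) ^ (m + 1) := by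
  classical
  -- `Λ = {∑ m ∈ I, a m * p ^ (-(m + 1)) | a < p}`, built by adding the largest order last.
  induction I using Finset.induction_on_max with
  | empty => exact ⟨{0}, by simp, by simp⟩
  | insert M I hlt ih =>
    obtain ⟨Λ, hcard, hΛ⟩ := ih
    set s : ℚ_[p] := (p : ℚ_[p]) ^ (-(M + 1))
    have hs : ‖s‖ = (p : ℝ) ^ (M + 1) := by rw [Padic.norm_p_zpow, neg_neg]
    have hnorm_sub : ∀ l ∈ Λ, ∀ l' ∈ Λ, ∀ a < p, ∀ b < p, a ≠ b →
        ‖(l + a * s) - (l' + b * s)‖ = (p : ℝ) ^ (M + 1) := by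
      intro l hl l' hl' a ha b hb hab
      have hdigit : ‖((a : ℚ_[p]) - b) * s‖ = (p : ℝ) ^ (M + 1) := by
        rw [norm_mul, Padic.norm_natCast_sub_natCast_eq_one_s19 ha hb hab, one_mul, hs]
      have hlt' : ‖l - l'‖ < ‖((a : ℚ_[p]) - b) * s‖ := by
        rw [hdigit]
        rcases eq_or_ne l l' with rfl | hll
        · rw [sub_self, norm_zero]; exact zpow_pos Padic.natCast_prime_pos _
        · obtain ⟨m, hm, hnorm⟩ := hΛ l hl l' hl' hll
          rw [hnorm]
          exact zpow_lt_zpow_right₀ Padic.one_lt_natCast_prime (by linarith [hlt m hm])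
      rw [show l + a * s - (l' + b * s) = ((a : ℚ_[p]) - b) * s + (l - l') by ring,
        Padic.add_eq_max_of_ne hlt'.ne', max_eq_left hlt'.le, hdigit]
    refine ⟨(Λ ×ˢ range p).image fun q => q.1 + q.2 * s, ?_, ?_⟩
    · rw [card_image_of_injOn, card_product, card_range, hcard,
        card_insert_of_notMem fun hM => (hlt M hM).false, pow_succ]
      rintro ⟨l, a⟩ hq ⟨l', b⟩ hq' heq
      simp only [coe_product, Set.mem_prod, mem_coe, mem_range] at hq hq' heq
      by_cases hab : a = b
      · subst hab
        simpa using heq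
      · have h0 := hnorm_sub l hq.1 l' hq'.1 a hq.2 b hq'.2 hab
        rw [heq, sub_self, norm_zero] at h0
        exact ((zpow_pos Padic.natCast_prime_pos _).ne h0).elim
    · simp only [mem_image, mem_product, mem_range, Prod.exists]
      rintro _ ⟨l, a, ⟨hl, ha⟩, rfl⟩ _ ⟨l', b, ⟨hl', hb⟩, rfl⟩ hne
      by_cases hab : a = b
      · subst hab
        obtain ⟨m, hm, hnorm⟩ := hΛ l hl l' hl' fun h => hne (by rw [h])
        exact ⟨m, mem_insert_of_mem hm, by rwa [add_sub_add_right_eq_sub]⟩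
      · exact ⟨M, mem_insert_self M I, hnorm_sub l hl l' hl' a ha b hb hab⟩

end FiniteSets

namespace IsStdChar

variable {p : ℕ} [Fact p.Prime] {ψ : ℚ_[p] → ℂ} (hψ : IsStdChar p ψ)
include hψ

theorem card_filter_norm_le_eq_of_sum_eq_zero {E : Finset ℚ_[p]} {t x y : ℚ_[p]} (hx : x ∈ E)
    (h0 : ∑ c ∈ E, ψ (t * c) = 0) (hy : ‖p * t * (y - x)‖ ≤ 1) :
    #{c ∈ E | ‖t * (c - y)‖ ≤ 1} = #{c ∈ E | ‖t * (c - x)‖ ≤ 1} := by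
  classical
  have hp : p.Prime := Fact.out
  obtain ⟨k, hk⟩ : ∃ k : ℕ, ∀ z ∈ insert y E, ‖t * (z - x)‖ ≤ (p : ℝ) ^ (k + 1) := by
    obtain ⟨k, hk⟩ := pow_unbounded_of_one_lt
      ((insert y E).sup' (insert_nonempty _ _) fun z => ‖t * (z - x)‖)
      (Padic.one_lt_natCast_prime (p := p))
    exact ⟨k, fun z hz => (le_sup' (fun z => ‖t * (z - x)‖) hz).trans
      (hk.le.trans (pow_le_pow_right₀ Padic.one_lt_natCast_prime.le k.le_succ))⟩
  obtain ⟨ξ, hξ, hpow⟩ := hψ.exists_isPrimitiveRoot k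
  choose! n hn hψn using fun z hz => hpow (t * (z - x)) (hk z hz)
  -- The two balls are the fibres of `n` over `j * p ^ k` and over `0`.
  have hball : ∀ z ∈ insert y E, {c ∈ E | ‖t * (c - z)‖ ≤ 1} = {c ∈ E | n c = n z} := by
    intro z hz
    refine filter_congr fun c hc => ?_
    have hc' : c ∈ insert y E := mem_insert_of_mem hc
    rw [show t * (c - z) = t * (c - x) - t * (z - x) by ring, ← hψ.map_eq_map_iff, hψn c hc',
      hψn z hz]
    exact ⟨fun h => hξ.pow_inj (hn c hc') (hn z hz) h, fun h => h ▸ rfl⟩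
  have hx' : x ∈ insert y E := mem_insert_of_mem hx
  have hnx : n x = 0 := hξ.pow_inj (hn x hx') (pow_pos hp.pos _) <| by
    rw [← hψn x hx', sub_self, mul_zero, hψ.map_zero, pow_zero]
  obtain ⟨j, hj⟩ : p ^ k ∣ n y := by
    have hdvd : p ^ k * p ∣ n y * p := by
      rw [← pow_succ]
      refine hξ.dvd_of_pow_eq_one _ ?_
      rw [pow_mul, ← hψn y (mem_insert_self _ _), ← hψ.map_natCast_mul, ← mul_assoc]
      exact hψ.map_eq_one_of_norm_le_one hy
    exact Nat.dvd_of_mul_dvd_mul_right hp.pos hdvd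
  have hjp : j < p := by
    have := hn y (mem_insert_self _ _)
    rw [hj, pow_succ] at this
    exact Nat.lt_of_mul_lt_mul_left this
  have hsum : ∑ c ∈ E, ξ ^ n c = 0 := by
    rw [← sum_congr rfl fun c hc => hψn c (mem_insert_of_mem hc)]
    simp_rw [mul_sub, hψ.map_sub, ← sum_mul, h0, zero_mul]
  rw [hball y (mem_insert_self _ _), hball x hx', hnx, hj, mul_comm]
  exact hξ.card_filter_eq_of_sum_pow_eq_zero hp E n (fun c hc => hn c (mem_insert_of_mem hc)) hsum
    hjp

theorem branchesAt_of_sum_eq_zero {E : Finset ℚ_[p]} {t : ℚ_[p]} {m : ℤ}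
    (ht : ‖t‖ = (p : ℝ) ^ (m + 1)) (h0 : ∑ c ∈ E, ψ (t * c) = 0) : BranchesAt E m := by
  intro x hx y hyx
  have hpt : ‖(p : ℚ_[p]) * t‖ = (p : ℝ) ^ m := by
    rw [norm_mul, Padic.norm_p, ht, zpow_add_one₀ Padic.natCast_prime_pos.ne', mul_comm,
      mul_inv_cancel_right₀ Padic.natCast_prime_pos.ne']
  have hcard := hψ.card_filter_norm_le_eq_of_sum_eq_zero hx h0
    ((Padic.norm_mul_le_one_iff hpt).2 hyx)
  obtain ⟨c, hc⟩ : {c ∈ E | ‖t * (c - y)‖ ≤ 1}.Nonempty :=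
    card_pos.1 (hcard ▸ card_pos.2 ⟨x, mem_filter.2 ⟨hx, by simp⟩⟩)
  obtain ⟨hcE, hcy⟩ := mem_filter.1 hc
  rw [Padic.norm_mul_le_one_iff ht] at hcy
  exact ⟨c, hcE, hcy.trans_lt (zpow_lt_zpow_right₀ Padic.one_lt_natCast_prime (by omega))⟩

theorem map_mul_eq_of_mem_subBall {E : Finset ℚ_[p]} {x t c : ℚ_[p]} {m : ℤ} {a : ℕ}
    (ht : ‖t‖ = (p : ℝ) ^ (m + 1)) (hc : c ∈ subBall E x m a) :
    ψ (t * c) = ψ (t * x) * ψ (t * (p : ℚ_[p]) ^ m) ^ a := by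
  rw [← hψ.map_natCast_mul, ← hψ.map_add, hψ.map_eq_map_iff,
    show t * c - (t * x + a * (t * (p : ℚ_[p]) ^ m)) = t * (c - (x + a * (p : ℚ_[p]) ^ m)) by ring,
    Padic.norm_mul_le_one_iff ht, Padic.norm_le_pow_iff_norm_lt_pow_add_one, neg_add,
    neg_add_cancel_right]
  exact (mem_filter.1 hc).2

theorem sum_eq_zero_of_card_eq_pow {E : Finset ℚ_[p]} (hE : #E = p ^ #(pOrdersFinset E)) {m : ℤ}
    (hm : m ∈ pOrdersFinset E) {t : ℚ_[p]} (ht : ‖t‖ = (p : ℝ) ^ (m + 1)) :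
    ∑ c ∈ E, ψ (t * c) = 0 := by
  induction hk : #(pOrdersFinset E) using Nat.strong_induction_on generalizing E with
  | _ k ih =>
  have hne : (pOrdersFinset E).Nonempty := ⟨m, hm⟩
  obtain ⟨x, hx, -⟩ := mem_pOrdersFinset.1 (min'_mem _ hne)
  set m₀ := (pOrdersFinset E).min' hne
  rw [sum_eq_sum_sum_subBall _ fun c hc => norm_sub_le_zpow_neg_min' hne hc hx]
  rcases eq_or_ne m m₀ with rfl | hmm₀
  · -- The `p` sub-balls have equal size and `ψ (t ·)` takes the values `ψ (t x) * ζ ^ a` on them.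
    set ζ := ψ (t * (p : ℚ_[p]) ^ m₀)
    have hζ : IsPrimitiveRoot ζ p := hψ.isPrimitiveRoot_of_norm_eq <| by
      rw [norm_mul, ht, Padic.norm_p_zpow, ← zpow_add₀ Padic.natCast_prime_pos.ne',
        add_neg_cancel_comm, zpow_one]
    calc ∑ a ∈ range p, ∑ c ∈ subBall E x m₀ a, ψ (t * c)
        = ∑ a ∈ range p, ((p ^ (k - 1) : ℕ) : ℂ) * (ψ (t * x) * ζ ^ a) :=
          sum_congr rfl fun a ha => by
            rw [sum_congr rfl fun c => hψ.map_mul_eq_of_mem_subBall ht, sum_const,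
              card_subBall_of_card_eq_pow hE hne hx (mem_range.1 ha), hk, nsmul_eq_mul]
      _ = ((p ^ (k - 1) : ℕ) : ℂ) * ψ (t * x) * ∑ a ∈ range p, ζ ^ a := by
          simp_rw [mul_sum, mul_assoc]
      _ = 0 := by rw [hζ.geom_sum_eq_zero (Fact.out : p.Prime).one_lt, mul_zero]
  · refine sum_eq_zero fun a ha => ?_
    have hcard := card_subBall_of_card_eq_pow hE hne hx (mem_range.1 ha)
    have horders := pOrdersFinset_subBall_of_card_eq_pow hE hne hx (mem_range.1 ha)
    have hk1 : 0 < k := hk ▸ card_pos.2 hne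
    refine ih (k - 1) (by omega) ?_ (horders ▸ mem_erase.2 ⟨hmm₀, hm⟩) ?_
    · rw [hcard, horders, card_erase_of_mem (min'_mem _ hne)]
    · rw [horders, card_erase_of_mem (min'_mem _ hne), hk]

end IsStdChar

-- `Λ` is a spectrum of the uniform probability measure on `F`.
def IsSpectralPair {p : ℕ} [Fact p.Prime] (ψ : ℚ_[p] → ℂ) (Λ F : Finset ℚ_[p]) : Prop :=
  #Λ = #F ∧ ∀ l ∈ Λ, ∀ l' ∈ Λ, l ≠ l' → ∑ c ∈ F, ψ ((l - l') * c) = 0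

theorem IsSpectralPair.symm {p : ℕ} [Fact p.Prime] {ψ : ℚ_[p] → ℂ} {Λ F : Finset ℚ_[p]}
    (h : IsSpectralPair ψ Λ F) (hψ : IsStdChar p ψ) : IsSpectralPair ψ F Λ := by
  classical
  obtain ⟨hcard, horth⟩ := h
  refine ⟨hcard.symm, fun x hx y hy hxy => ?_⟩
  -- The square matrix `A` has orthogonal rows of squared length `#F`, hence orthogonal columns.
  let A : Matrix Λ F ℂ := Matrix.of fun l c => ψ (l * c)
  have hF : (#F : ℂ) ≠ 0 := Nat.cast_ne_zero.2 (card_ne_zero_of_mem hx)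
  have hAA : A * ((#F : ℂ)⁻¹ • A.conjTranspose) = 1 := by
    ext l l'
    rw [Matrix.mul_smul, Matrix.smul_apply, Matrix.mul_apply]
    simp only [A, Matrix.conjTranspose_apply, Matrix.of_apply, hψ.mul_star_map, ← sub_mul]
    by_cases hll : l = l'
    · subst hll
      simp [hψ.map_zero, hF]
    · rw [Matrix.one_apply_ne hll, sum_coe_sort F fun c => ψ ((l - l') * c),
        horth l l.2 l' l'.2 (Subtype.coe_injective.ne hll), smul_zero]
  have hAA' := congrFun (congrFun
    ((Matrix.mul_eq_one_comm_of_card_eq _ _ _ (by simp [hcard])).1 hAA) ⟨y, hy⟩) ⟨x, hx⟩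
  rw [Matrix.smul_mul, Matrix.smul_apply, Matrix.mul_apply,
    Matrix.one_apply_ne (by simpa using hxy.symm), smul_eq_mul, mul_eq_zero] at hAA'
  simp only [A, Matrix.conjTranspose_apply, Matrix.of_apply, inv_eq_zero, hF, false_or] at hAA'
  simp_rw [mul_comm (star _), hψ.mul_star_map, ← mul_sub, mul_comm _ (_ - _)] at hAA'
  rwa [sum_coe_sort Λ fun l => ψ ((x - y) * l)] at hAA'

/-- the uniform probability measure on a nonempty finite set `F ⊆ ℚ_p` is a
spectral measure iff `#F = p^{#I_F}`. -/
theorem finite_spectral_iff_card_eq_pow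
    (p : ℕ) [Fact p.Prime] (ψ : ℚ_[p] → ℂ) (hψ : IsStdChar p ψ)
    (F : Finset ℚ_[p]) (hFne : F.Nonempty) :
    (∃ Λ : Finset ℚ_[p], Λ.card = F.card ∧
      ∀ l ∈ Λ, ∀ l' ∈ Λ, l ≠ l' → ∑ c ∈ F, ψ ((l - l') * c) = 0) ↔
    F.card = p ^ (pOrders p (↑F : Set ℚ_[p])).ncard := by
  rw [← coe_pOrdersFinset, Set.ncard_coe_finset]
  constructor
  · rintro ⟨Λ, hΛ : IsSpectralPair ψ Λ F⟩
    have hΛne : Λ.Nonempty := card_pos.1 (hΛ.1 ▸ hFne.card_pos)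
    refine (card_le_pow_card_pOrdersFinset F).antisymm
      (pow_card_le_card_of_branchesAt _ hFne fun m hm => ?_)
    obtain ⟨x, hx, y, hy, hxy, hnorm⟩ := mem_pOrdersFinset.1 hm
    obtain ⟨l, hl, l', hl', hll', hnorm'⟩ := (hψ.branchesAt_of_sum_eq_zero (m := -m - 1)
      (by rw [hnorm, sub_add_cancel]) ((hΛ.symm hψ).2 x hx y hy hxy)).exists_norm_sub_eq hΛne
    exact hψ.branchesAt_of_sum_eq_zero (by rw [hnorm']; ring_nf) (hΛ.2 l hl l' hl' hll')
  · intro hcard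
    obtain ⟨Λ, hΛcard, hΛ⟩ := exists_card_eq_pow_forall_norm_sub_eq (p := p) (pOrdersFinset F)
    refine ⟨Λ, hΛcard.trans hcard.symm, fun l hl l' hl' hll' => ?_⟩
    obtain ⟨m, hm, hnorm⟩ := hΛ l hl l' hl' hll'
    exact hψ.sum_eq_zero_of_card_eq_pow hcard hm hnorm
end
end
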